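/- arXiv:1501.06394 — 8 statements merged into one kernel-verified Lean document; each statement's English description precedes it below -/
import Mathlib

section
/- Every finite soluble group G satisfies l(G) = Ω(|G|), where Ω(m) denotes the number of prime divisors of m counted with multiplicity. -/
/-!
Along a strict chain of subgroups each order properly divides the next, so `Ω` of the order
grows at every step and no chain is longer than `Ω |G|`; this holds for every finite group.
Conversely, in a nontrivial finite soluble group the derived subgroup is proper, so it lies in a
maximal subgroup `M`. Such an `M` is normal with simple abelian quotient, so its index is a prime
`p`, and a longest chain in `M`, capped by `G`, has length `Ω (|G| / p) + 1 = Ω |G|`.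
-/

/-- The length of a finite group `G`: the largest `k` such that there is a strictly
increasing chain of subgroups `G₀ < G₁ < ⋯ < G_k` of `G`. -/
noncomputable def groupLength (G : Type*) [Group G] : ℕ :=
  sSup {k : ℕ | ∃ c : Fin (k + 1) → Subgroup G, StrictMono c}

open ArithmeticFunction Group
open scoped ArithmeticFunction.Omega

namespace ArithmeticFunction

theorem cardFactors_le_of_dvd {m n : ℕ} (hn : n ≠ 0) (h : m ∣ n) : Ω m ≤ Ω n := by
  simpa only [cardFactors_apply] using (Nat.primeFactorsList_sublist_of_dvd h hn).length_le

theorem cardFactors_lt_of_dvd_of_lt {m n : ℕ} (hn : n ≠ 0) (h : m ∣ n) (hlt : m < n) :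
    Ω m < Ω n := by
  obtain ⟨c, rfl⟩ := h
  have hm : m ≠ 0 := left_ne_zero_of_mul hn
  have hc : c ≠ 0 := right_ne_zero_of_mul hn
  have hc1 : c ≠ 1 := by rintro rfl; simp at hlt
  have : Ω c ≠ 0 := by simp [cardFactors_eq_zero_iff_eq_zero_or_one, hc, hc1]
  rw [cardFactors_mul hm hc]
  omega

end ArithmeticFunction

theorem QuotientGroup.isSimpleGroup_of_isCoatom {G : Type*} [Group G] {M : Subgroup G}
    [M.Normal] (hM : IsCoatom M) : IsSimpleGroup (G ⧸ M) := by
  have : Nontrivial (G ⧸ M) := QuotientGroup.nontrivial_iff.mpr hM.1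
  refine ⟨fun N _ => ?_⟩
  have hinj := Subgroup.comap_injective (QuotientGroup.mk'_surjective M)
  rcases hM.le_iff.mp (QuotientGroup.le_comap_mk' M N) with htop | hbot
  · exact .inr (hinj (by rw [htop, Subgroup.comap_top]))
  · refine .inl (hinj ?_)
    rw [hbot, MonoidHom.comap_bot, QuotientGroup.ker_mk']

namespace Subgroup

variable {G : Type*} [Group G]

theorem card_lt_card_of_lt [Finite G] {H K : Subgroup G} (h : H < K) :
    Nat.card H < Nat.card K :=
  (card_le_of_le h.le).lt_of_ne fun hc => h.ne (eq_of_le_of_card_ge h.le hc.ge)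

theorem strictMono_cardFactors_card [Finite G] :
    StrictMono fun H : Subgroup G => Ω (Nat.card H) := fun _ _ hHK =>
  cardFactors_lt_of_dvd_of_lt Nat.card_pos.ne' (card_dvd_of_le hHK.le) (card_lt_card_of_lt hHK)

open scoped commutatorElement in
theorem normal_of_commutator_le {M : Subgroup G} (h : _root_.commutator G ≤ M) : M.Normal where
  conj_mem g hg x := by
    have : ⁅x, g⁆ ∈ M := h (commutator_mem_commutator (mem_top x) (mem_top g))
    simpa [commutatorElement_def] using M.mul_mem this hg

theorem index_prime_of_isCoatom_of_commutator_le [Finite G] {M : Subgroup G} (hM : IsCoatom M)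
    (h : _root_.commutator G ≤ M) : M.index.Prime := by
  have := normal_of_commutator_le h
  have := Normal.quotient_commutative_iff_commutator_le.mpr h
  have := QuotientGroup.isSimpleGroup_of_isCoatom hM
  rw [index_eq_card]
  exact Group.is_simple_iff_prime_card.mp this

end Subgroup

theorem Group.IsSolvable.exists_index_prime (G : Type*) [Group G] [Finite G] [IsSolvable G]
    [Nontrivial G] : ∃ H : Subgroup G, H.index.Prime := by
  obtain ⟨M, hM, hle⟩ := (eq_top_or_exists_le_coatom (commutator G)).resolve_left
    (commutator_lt_top_of_nontrivial G).ne
  exact ⟨M, M.index_prime_of_isCoatom_of_commutator_le hM hle⟩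

theorem LTSeries.length_le_cardFactors_card {G : Type*} [Group G] [Finite G]
    (p : LTSeries (Subgroup G)) : p.length ≤ Ω (Nat.card G) := by
  have hchain := (p.map _ Subgroup.strictMono_cardFactors_card).head_add_length_le_nat
  have hlast : Ω (Nat.card p.last) ≤ Ω (Nat.card G) :=
    cardFactors_le_of_dvd Nat.card_pos.ne' p.last.card_subgroup_dvd_card
  simp only [LTSeries.head_map, LTSeries.last_map, LTSeries.map_length] at hchain
  omega

theorem Group.IsSolvable.exists_ltSeries_length_eq_cardFactors_card (G : Type*) [Group G]
    [Finite G] [IsSolvable G] : ∃ p : LTSeries (Subgroup G), p.length = Ω (Nat.card G) := by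
  induction hn : Nat.card G using Nat.strong_induction_on generalizing G with
  | _ n ih =>
  rcases subsingleton_or_nontrivial G with hG | hG
  · exact ⟨RelSeries.singleton _ ⊤, by simp [← hn]⟩
  obtain ⟨H, hH⟩ := exists_index_prime G
  have hcard : Nat.card H * H.index = n := hn ▸ H.card_mul_index
  obtain ⟨p, hp⟩ := ih (Nat.card H) (by nlinarith [hH.two_le, Nat.card_pos (α := H)]) H rfl
  let q := p.map _ fun _ _ => Subgroup.map_subtype_lt_map_subtype.mpr
  have hq : q.last < ⊤ := (Subgroup.map_subtype_le _).trans_lt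
    (lt_top_iff_ne_top.mpr fun h => hH.ne_one (by simp [h]))
  refine ⟨q.snoc ⊤ hq, ?_⟩
  rw [RelSeries.snoc_length, ← hcard, cardFactors_mul Nat.card_pos.ne' hH.ne_zero,
    cardFactors_apply_prime hH]
  exact congrArg (· + 1) hp

/-- Every finite soluble group `G` satisfies `l(G) = Ω(|G|)`, where `Ω(m)` is the number
of prime divisors of `m` counted with multiplicity. -/
theorem groupLength_eq_Omega_of_solvable (G : Type*) [Group G] [Fintype G] [Group.IsSolvable G] :
    groupLength G = (Fintype.card G).primeFactorsList.length := by
  rw [← Nat.card_eq_fintype_card, ← cardFactors_apply]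
  obtain ⟨p, hp⟩ := IsSolvable.exists_ltSeries_length_eq_cardFactors_card G
  refine IsGreatest.csSup_eq ⟨hp ▸ ⟨p, p.strictMono⟩, ?_⟩
  rintro k ⟨c, hc⟩
  exact (LTSeries.mk k c hc).length_le_cardFactors_card
end

section
/- Let S be a finite semigroup and let I be a non-empty two-sided ideal of S. Then l(S) = l(I) + l(S/I), where S/I is the Rees quotient of S by I. -/
/-- The length of a semigroup `M` (stated for any multiplicative structure): the largest
number of non-empty subsemigroups of `M` in a chain, minus 1; equivalently the largest
`k` for which there is a strictly increasing chain of `k + 1` non-empty subsemigroups. -/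
noncomputable def semigroupLength (M : Type*) [Mul M] : ℕ :=
  sSup {k : ℕ | ∃ c : Fin (k + 1) → Subsemigroup M,
    StrictMono c ∧ ∀ i, ((c i : Set M)).Nonempty}

/-- The Rees quotient `S/I`: the elements of `S \ I` together with an extra zero
element (represented by `none`). -/
def ReesQuotient {S : Type*} [Mul S] (I : Set S) : Type _ :=
  Option {x : S // x ∉ I}

/-- Multiplication in the Rees quotient: `x * y` is the product in `S` if that product
lies outside `I`, and the zero element `none` otherwise; `none` is absorbing. -/
noncomputable instance {S : Type*} [Mul S] (I : Set S) : Mul (ReesQuotient I) :=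
  ⟨fun a b =>
    match a, b with
    | some x, some y =>
        letI := Classical.dec ((x.1 * y.1) ∈ I)
        if h : (x.1 * y.1) ∈ I then (none : ReesQuotient I)
        else (some ⟨x.1 * y.1, h⟩ : ReesQuotient I)
    | _, _ => (none : ReesQuotient I)⟩

/-!
Measure everything by heights in the lattice of subsemigroups: `⊥` is the only empty
subsemigroup, so `height ⊤ = l(M) + 1`. For an ideal `I` of `M`, a subsemigroup `C` is determined
by the subsemigroups `C ∩ I` and `C ∪ I`, both monotone in `C`; so along a chain one of them grows
at every step. Together with concatenating a chain below `I` with one above it, this gives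
`height ⊤ = height_I ⊤ + height_[I, ⊤] ⊤`. The quotient map identifies `[I, ⊤]` with `[{0}, ⊤]`
in `S/I`, and the same identity for the ideal `{0}` of `S/I` reads
`height_(S/I) ⊤ = 1 + height_[{0}, ⊤] ⊤`.
-/

open Order

theorem LTSeries.apply_head_add_length_le {α : Type*} [Preorder α] {φ : α → ℕ∞}
    (hφ : ∀ ⦃x y⦄, x < y → φ x + 1 ≤ φ y) (p : LTSeries α) :
    φ p.head + p.length ≤ φ p.last := by
  suffices h : ∀ i : Fin (p.length + 1), φ p.head + i ≤ φ (p i) from h (Fin.last _)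
  intro i
  induction i using Fin.induction with
  | zero => simp [RelSeries.head]
  | succ i ih =>
    calc φ p.head + (i.succ : ℕ) = φ p.head + (i.castSucc : ℕ) + 1 := by simp [add_assoc]
      _ ≤ φ (p i.castSucc) + 1 := by gcongr
      _ ≤ φ (p i.succ) := hφ (p.strictMono Fin.castSucc_lt_succ)

theorem Order.height_add_height_Ici_le {α : Type*} [Preorder α] {a : α} (b : Set.Ici a) :
    height a + height b ≤ height (b : α) := by
  rw [height_eq_iSup_last_eq b,
    ENat.add_biSup' (p := fun q : LTSeries _ => q.last = b) ⟨RelSeries.singleton _ b, rfl⟩]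
  refine iSup₂_le fun q hq => ?_
  let q' := LTSeries.map q Subtype.val (Subtype.strictMono_coe _)
  calc height a + q.length ≤ height q'.head + q.length := by gcongr; exact q.head.2
    _ ≤ height q'.last := LTSeries.apply_head_add_length_le (fun _ _ h => height_add_one_le h) _
    _ = height (b : α) := by rw [LTSeries.last_map, hq]

section Length

variable {M : Type*} [Mul M]

theorem Subsemigroup.bot_lt_iff_coe_nonempty {T : Subsemigroup M} :
    ⊥ < T ↔ (T : Set M).Nonempty := by
  rw [bot_lt_iff_ne_bot, Ne, ← SetLike.coe_set_eq, coe_bot, Set.nonempty_iff_ne_empty]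

theorem Subsemigroup.height_top_of_subsingleton [Nonempty M] [Subsingleton M] :
    height (⊤ : Subsemigroup M) = 1 := by
  have hbot : (⊥ : Subsemigroup M) < ⊤ := bot_lt_iff_coe_nonempty.2 Set.univ_nonempty
  refine le_antisymm (height_le_coe_iff.2 fun T hT => ?_) (by simpa using height_add_one_le hbot)
  have : T = ⊥ := eq_bot_iff.2 fun x hx =>
    absurd (eq_top_iff.2 fun y _ => Subsingleton.elim x y ▸ hx) hT.ne
  simp [this]

variable [Finite M]

theorem bddAbove_semigroupLength_set : BddAbove {k : ℕ | ∃ c : Fin (k + 1) → Subsemigroup M,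
    StrictMono c ∧ ∀ i, ((c i : Set M)).Nonempty} := by
  refine ⟨Nat.card (Subsemigroup M), fun k ⟨c, hc, _⟩ => ?_⟩
  have := Nat.card_le_card_of_injective c hc.injective
  simp only [Nat.card_eq_fintype_card, Fintype.card_fin] at this
  omega

theorem length_le_semigroupLength (p : LTSeries (Subsemigroup M))
    (hp : (p.head : Set M).Nonempty) : p.length ≤ semigroupLength M :=
  le_csSup bddAbove_semigroupLength_set
    ⟨p, p.strictMono, fun i => hp.mono (p.monotone (Fin.zero_le i))⟩

theorem exists_ltSeries_length_eq_semigroupLength [Nonempty M] :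
    ∃ p : LTSeries (Subsemigroup M), (p.head : Set M).Nonempty ∧ p.length = semigroupLength M := by
  obtain ⟨c, hc, hne⟩ : semigroupLength M ∈ {k : ℕ | ∃ c : Fin (k + 1) → Subsemigroup M,
      StrictMono c ∧ ∀ i, ((c i : Set M)).Nonempty} :=
    Nat.sSup_mem ⟨0, fun _ => ⊤, Subsingleton.strictMono (α := Fin 1) _,
      fun _ => Set.univ_nonempty⟩ bddAbove_semigroupLength_set
  exact ⟨LTSeries.mk _ c hc, hne 0, rfl⟩

theorem height_top_eq_semigroupLength_add_one [Nonempty M] :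
    height (⊤ : Subsemigroup M) = semigroupLength M + 1 := by
  refine le_antisymm (height_le fun p _ => ?_) ?_
  · rcases Nat.eq_zero_or_pos p.length with h | h
    · simp [h]
    have hne : ((p.tail h.ne').head : Set M).Nonempty := by
      rw [← Subsemigroup.bot_lt_iff_coe_nonempty]
      exact bot_le.trans_lt (p.step ⟨0, h⟩)
    have := length_le_semigroupLength _ hne
    simp only [RelSeries.tail_length] at this
    exact_mod_cast (by omega : p.length ≤ semigroupLength M + 1)
  · obtain ⟨p, hne, hp⟩ := exists_ltSeries_length_eq_semigroupLength (M := M)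
    have := length_le_height (p := p.cons ⊥ (Subsemigroup.bot_lt_iff_coe_nonempty.2 hne)) le_top
    simpa [hp] using this

end Length

namespace Subsemigroup

variable {M : Type*} [Mul M]

def IsIdeal (I : Subsemigroup M) : Prop :=
  ∀ a ∈ I, ∀ s : M, s * a ∈ I ∧ a * s ∈ I

variable {I : Subsemigroup M}

theorem height_top_add_height_top_Ici_le :
    height (⊤ : Subsemigroup I) + height (⊤ : Set.Ici I) ≤ height (⊤ : Subsemigroup M) := by
  have hle : height (⊤ : Subsemigroup I) ≤ height I := by
    have := height_le_height_apply_of_strictMono _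
      (map_strictMono_of_injective (MulMemClass.subtype_injective I)) (⊤ : Subsemigroup I)
    rwa [← MulHom.srange_eq_map, range_subtype] at this
  exact (add_le_add hle le_rfl).trans (height_add_height_Ici_le (⊤ : Set.Ici I))

namespace IsIdeal

variable (hI : I.IsIdeal)
include hI

theorem mem_sup_iff {C : Subsemigroup M} {x : M} : x ∈ C ⊔ I ↔ x ∈ C ∨ x ∈ I := by
  refine ⟨fun hx => ?_, fun hx => hx.elim mem_sup_left mem_sup_right⟩
  let D : Subsemigroup M :=
    { carrier := C ∪ I
      mul_mem' := by
        rintro a b (ha | ha) (hb | hb)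
        · exact Or.inl (C.mul_mem ha hb)
        · exact Or.inr (hI b hb a).1
        all_goals exact Or.inr (hI a ha b).2 }
  exact (sup_le (show C ≤ D from fun _ => Or.inl) (show I ≤ D from fun _ => Or.inr)) hx

theorem comap_subtype_lt_or_sup_lt {C C' : Subsemigroup M} (h : C < C') :
    C.comap (MulMemClass.subtype I) < C'.comap (MulMemClass.subtype I) ∨ C ⊔ I < C' ⊔ I := by
  by_contra! hne
  have hinf := (monotone_comap (f := MulMemClass.subtype I) h.le).eq_of_not_lt hne.1
  have hsup := (sup_le_sup_right h.le I).eq_of_not_lt hne.2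
  refine h.not_ge fun x hx => ?_
  by_cases hxI : x ∈ I
  · exact hinf.ge (show (⟨x, hxI⟩ : I) ∈ C'.comap (MulMemClass.subtype I) from hx)
  · have hx' : x ∈ C ⊔ I := hsup ▸ mem_sup_left hx
    exact (hI.mem_sup_iff.1 hx').resolve_right hxI

theorem height_top_le :
    height (⊤ : Subsemigroup M) ≤ height (⊤ : Subsemigroup I) + height (⊤ : Set.Ici I) := by
  let f : Subsemigroup M → Subsemigroup I := comap (MulMemClass.subtype I)
  let g : Subsemigroup M → Set.Ici I := fun C => ⟨C ⊔ I, Set.mem_Ici.2 le_sup_right⟩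
  have hφ : ∀ ⦃C C'⦄, C < C' →
      height (f C) + height (g C) + 1 ≤ height (f C') + height (g C') := by
    intro C C' h
    rcases hI.comap_subtype_lt_or_sup_lt h with h' | h'
    · calc height (f C) + height (g C) + 1 = height (f C) + 1 + height (g C) := add_right_comm ..
        _ ≤ _ := add_le_add (height_add_one_le h') (height_mono (sup_le_sup_right h.le I))
    · calc height (f C) + height (g C) + 1 = height (f C) + (height (g C) + 1) := add_assoc ..
        _ ≤ _ := add_le_add (height_mono (monotone_comap h.le))
          (height_add_one_le (show g C < g C' from h'))
  refine height_le fun p _ => ?_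
  calc (p.length : ℕ∞) ≤ height (f p.head) + height (g p.head) + p.length := le_add_self
    _ ≤ height (f p.last) + height (g p.last) :=
        LTSeries.apply_head_add_length_le (φ := fun C => height (f C) + height (g C)) hφ p
    _ ≤ _ := add_le_add (height_mono le_top) (height_mono le_top)

theorem height_top_eq :
    height (⊤ : Subsemigroup M) = height (⊤ : Subsemigroup I) + height (⊤ : Set.Ici I) :=
  hI.height_top_le.antisymm height_top_add_height_top_Ici_le

end IsIdeal

end Subsemigroup

namespace ReesQuotient

variable {S : Type*} [Mul S]

noncomputable instance (I : Set S) : MulZeroClass (ReesQuotient I) where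
  zero := none
  zero_mul _ := rfl
  mul_zero a := by cases a <;> rfl

def of {I : Set S} (x : {x : S // x ∉ I}) : ReesQuotient I := some x

theorem of_injective {I : Set S} : Function.Injective (of (I := I)) := Option.some_injective _

theorem of_ne_zero {I : Set S} (x : {x : S // x ∉ I}) : of x ≠ 0 := Option.some_ne_none x

theorem of_mul_of_of_mem {I : Set S} {x y : {x : S // x ∉ I}} (h : x.1 * y.1 ∈ I) :
    of x * of y = 0 := dif_pos h

theorem of_mul_of_of_notMem {I : Set S} {x y : {x : S // x ∉ I}} (h : x.1 * y.1 ∉ I) :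
    of x * of y = of ⟨x.1 * y.1, h⟩ := dif_neg h

variable {I : Subsemigroup S}

def zeroSubsemigroup : Subsemigroup (ReesQuotient (I : Set S)) where
  carrier := {0}
  mul_mem' := by rintro _ _ rfl rfl; exact zero_mul 0

theorem isIdeal_zeroSubsemigroup :
    (zeroSubsemigroup : Subsemigroup (ReesQuotient (I : Set S))).IsIdeal := by
  rintro _ rfl s
  exact ⟨mul_zero s, zero_mul s⟩

theorem height_top_zeroSubsemigroup :
    height (⊤ : Subsemigroup (zeroSubsemigroup : Subsemigroup (ReesQuotient (I : Set S)))) = 1 :=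
  have : Nonempty (zeroSubsemigroup : Subsemigroup (ReesQuotient (I : Set S))) := ⟨⟨0, rfl⟩⟩
  have : Subsingleton (zeroSubsemigroup : Subsemigroup (ReesQuotient (I : Set S))) :=
    ⟨fun a b => Subtype.ext (a.2.trans b.2.symm)⟩
  Subsemigroup.height_top_of_subsingleton

variable (hI : I.IsIdeal)

open Classical in
noncomputable def mk : S →ₙ* ReesQuotient (I : Set S) where
  toFun x := if h : x ∈ I then 0 else of ⟨x, h⟩
  map_mul' x y := by
    by_cases hx : x ∈ I
    · rw [dif_pos (hI x hx y).2, dif_pos hx, zero_mul]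
    by_cases hy : y ∈ I
    · rw [dif_pos (hI y hy x).1, dif_pos hy, mul_zero]
    by_cases hxy : x * y ∈ I
    · rw [dif_pos hxy, dif_neg hx, dif_neg hy, of_mul_of_of_mem hxy]
    · rw [dif_neg hxy, dif_neg hx, dif_neg hy, of_mul_of_of_notMem hxy]

theorem mk_of_mem {x : S} (hx : x ∈ I) : mk hI x = 0 := dif_pos hx

theorem mk_of_notMem {x : S} (hx : x ∉ I) : mk hI x = of ⟨x, hx⟩ := dif_neg hx

theorem mk_surjective (hne : (I : Set S).Nonempty) : Function.Surjective (mk hI) := by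
  rintro (_ | x)
  · obtain ⟨x, hx⟩ := hne
    exact ⟨x, mk_of_mem hI hx⟩
  · exact ⟨x, mk_of_notMem hI x.2⟩

theorem comap_map_mk {D : Subsemigroup S} (hD : I ≤ D) : (D.map (mk hI)).comap (mk hI) = D := by
  refine le_antisymm (fun x hx => ?_) (Subsemigroup.le_comap_map D)
  obtain ⟨y, hy, hyx⟩ := Subsemigroup.mem_map.1 hx
  by_cases hxI : x ∈ I
  · exact hD hxI
  have hyI : y ∉ I := fun hyI => of_ne_zero ⟨x, hxI⟩ <| by
    rw [← mk_of_notMem hI hxI, ← hyx, mk_of_mem hI hyI]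
  rw [mk_of_notMem hI hxI, mk_of_notMem hI hyI] at hyx
  cases of_injective hyx
  exact hy

noncomputable def iciEquiv (hne : (I : Set S).Nonempty) :
    Set.Ici I ≃o Set.Ici (zeroSubsemigroup : Subsemigroup (ReesQuotient (I : Set S))) :=
  Equiv.toOrderIso
    { toFun := fun D => ⟨D.1.map (mk hI), by
        rintro _ rfl
        obtain ⟨x, hx⟩ := hne
        exact ⟨x, D.2 hx, mk_of_mem hI hx⟩⟩
      invFun := fun V => ⟨V.1.comap (mk hI), fun x hx => by
        rw [Subsemigroup.mem_comap, mk_of_mem hI hx]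
        exact V.2 rfl⟩
      left_inv := fun D => Subtype.ext (comap_map_mk hI D.2)
      right_inv := fun V => Subtype.ext
        (Subsemigroup.map_comap_eq_of_surjective (mk_surjective hI hne) V.1) }
    (fun _ _ h => Subsemigroup.monotone_map h) (fun _ _ h => Subsemigroup.monotone_comap h)

end ReesQuotient

/-- Let `S` be a finite semigroup and let `I` be a non-empty two-sided ideal of `S`.
Then `l(S) = l(I) + l(S/I)`, where `S/I` is the Rees quotient of `S` by `I`. -/
theorem semigroupLength_eq_ideal_add_reesQuotient (S : Type*) [Semigroup S] [Fintype S]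
    (I : Subsemigroup S) (hne : (I : Set S).Nonempty)
    (hideal : ∀ a ∈ I, ∀ s : S, s * a ∈ I ∧ a * s ∈ I) :
    semigroupLength S = semigroupLength I + semigroupLength (ReesQuotient (I : Set S)) := by
  have : Nonempty I := hne.to_subtype
  have : Nonempty S := ⟨(Classical.arbitrary I : S)⟩
  have : Finite (ReesQuotient (I : Set S)) := inferInstanceAs (Finite (Option _))
  have : Nonempty (ReesQuotient (I : Set S)) := ⟨0⟩
  have hS := Subsemigroup.IsIdeal.height_top_eq (I := I) hideal
  have hQ := (ReesQuotient.isIdeal_zeroSubsemigroup (I := I)).height_top_eq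
  rw [ReesQuotient.height_top_zeroSubsemigroup, ← (ReesQuotient.iciEquiv hideal hne).map_top,
    height_orderIso] at hQ
  simp only [height_top_eq_semigroupLength_add_one] at hS hQ
  have key : (semigroupLength S : ℕ∞) + 1 + 1 =
      semigroupLength I + 1 + (semigroupLength (ReesQuotient (I : Set S)) + 1) := by
    rw [hS, hQ]; ring
  norm_cast at key
  omega
end

section
/- Let S be a semigroup generated by a single element s, and let m and n be the least positive integers such that s^{m+n} = s^m. Then l(S) = m + Ω(n) − 1, where Ω(n) is the number of prime divisors of n counted with multiplicity. -/
/-- Positive powers in a semigroup: `spow s k = s ^ k` for `k ≥ 1` (and, by convention,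
`spow s 0 = s`; only positive exponents are ever used below). -/
def spow {S : Type*} [Semigroup S] (s : S) : ℕ → S
  | 0 => s
  | 1 => s
  | (n + 2) => spow s (n + 1) * s

/-!
The powers `s ^ k` with `k ≥ m` form a cyclic group `K ≅ ZMod n`, and a nonempty subsemigroup
`A` meets it in a subgroup.  The rank `#{k < m | s ^ k ∈ A} + Ω |A ∩ K|` is at most
`m - 1 + Ω n` and, by Lagrange's theorem, strictly increases along a chain.  Conversely the
subsemigroups `{s ^ k | t ≤ k, d ∣ k}` form a chain of that length: first `d` runs through the
tails `p_{i+1} ⋯ p_r` of the prime factorisation `n = p_1 ⋯ p_r`, then the threshold `t`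
decreases to `1`.
-/

open scoped ArithmeticFunction.Omega

namespace ArithmeticFunction

theorem cardFactors_le_of_dvd_s5 {a b : ℕ} (h : a ∣ b) (hb : b ≠ 0) : Ω a ≤ Ω b := by
  obtain ⟨c, rfl⟩ := h
  rw [cardFactors_mul (left_ne_zero_of_mul hb) (right_ne_zero_of_mul hb)]
  exact Nat.le_add_right _ _

theorem cardFactors_lt_of_dvd_of_lt_s5 {a b : ℕ} (h : a ∣ b) (hab : a < b) : Ω a < Ω b := by
  obtain ⟨c, rfl⟩ := h
  have ha : a ≠ 0 := by rintro rfl; simp at hab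
  have hc : 1 < c := by
    by_contra! hc
    interval_cases c <;> simp at hab
  rw [cardFactors_mul ha (by omega)]
  have := cardFactors_pos_iff_one_lt.mpr hc
  omega

end ArithmeticFunction

theorem Nat.prod_drop_primeFactorsList_dvd (n i : ℕ) :
    (n.primeFactorsList.drop i).prod ∣ n := by
  rcases eq_or_ne n 0 with rfl | hn
  · simp
  · exact (List.drop_sublist i _).prod_dvd_prod.trans (Nat.prod_primeFactorsList hn).dvd

namespace Subsemigroup

theorem pow_succ_mem {M : Type*} [Monoid M] (H : Subsemigroup M) {x : M} (hx : x ∈ H) :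
    ∀ k : ℕ, x ^ (k + 1) ∈ H
  | 0 => by simpa
  | k + 1 => by rw [pow_succ]; exact H.mul_mem (pow_succ_mem H hx k) hx

theorem card_lt_card_of_lt {M : Type*} [Mul M] [Finite M] {H K : Subsemigroup M} (h : H < K) :
    Nat.card H < Nat.card K :=
  Set.ncard_lt_ncard (SetLike.coe_ssubset_coe.mpr h) (Set.toFinite _)

variable {G : Type*} [Group G] [Finite G]

def toSubgroupOfFinite (H : Subsemigroup G) (hH : (H : Set G).Nonempty) : Subgroup G where
  toSubsemigroup := H
  one_mem' := by
    obtain ⟨x, hx⟩ := hH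
    have := H.pow_succ_mem hx (orderOf x - 1)
    rwa [Nat.sub_add_cancel (orderOf_pos x), pow_orderOf_eq_one] at this
  inv_mem' {x} hx := by
    have hinv : x ^ (2 * orderOf x - 2 + 1) = x⁻¹ := by
      rw [eq_inv_iff_mul_eq_one, ← pow_succ, show 2 * orderOf x - 2 + 1 + 1 = orderOf x * 2 by
        have := orderOf_pos x; omega, pow_mul, pow_orderOf_eq_one, one_pow]
    exact hinv ▸ H.pow_succ_mem hx _

theorem card_dvd_of_le {H K : Subsemigroup G} (hH : (H : Set G).Nonempty) (hHK : H ≤ K) :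
    Nat.card H ∣ Nat.card K :=
  Subgroup.card_dvd_of_le (H := H.toSubgroupOfFinite hH)
    (K := K.toSubgroupOfFinite (hH.mono hHK)) hHK

theorem card_dvd_card {H : Subsemigroup G} (hH : (H : Set G).Nonempty) :
    Nat.card H ∣ Nat.card G :=
  Subgroup.card_subgroup_dvd_card (H.toSubgroupOfFinite hH)

end Subsemigroup

theorem semigroupLength_eq_of_rank {M : Type*} [Mul M] {N : ℕ} (rank : Subsemigroup M → ℕ)
    (rank_le : ∀ A : Subsemigroup M, (A : Set M).Nonempty → rank A ≤ N)
    (rank_lt : ∀ A B : Subsemigroup M, (A : Set M).Nonempty → A < B → rank A < rank B)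
    (c : Fin (N + 1) → Subsemigroup M) (hc : StrictMono c) (hne : ∀ i, (c i : Set M).Nonempty) :
    semigroupLength M = N := by
  refine IsGreatest.csSup_eq ⟨⟨c, hc, hne⟩, ?_⟩
  rintro k ⟨c', hc', hne'⟩
  have hmono : StrictMono (rank ∘ c') := fun i j hij => rank_lt _ _ (hne' i) (hc' hij)
  have := Fintype.card_le_of_injective
    (fun i => (⟨rank (c' i), Nat.lt_succ_of_le (rank_le _ (hne' i))⟩ : Fin (N + 1)))
    fun i j hij => hmono.injective (Fin.mk.inj hij)
  simpa only [Fintype.card_fin, add_le_add_iff_right] using this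

section spow

variable {S : Type*} [Semigroup S] (s : S)

theorem spow_succ {k : ℕ} (hk : 0 < k) : spow s (k + 1) = spow s k * s := by
  obtain ⟨j, rfl⟩ := Nat.exists_eq_add_of_lt hk
  rfl

theorem spow_add {a b : ℕ} (ha : 0 < a) (hb : 0 < b) :
    spow s (a + b) = spow s a * spow s b := by
  induction b, hb using Nat.le_induction with
  | base => exact spow_succ s ha
  | succ b hb ih => rw [← add_assoc, spow_succ s (by omega), ih, mul_assoc, ← spow_succ s hb]

theorem spow_mul_mem {A : Subsemigroup S} {k : ℕ} (hk : 0 < k) (h : spow s k ∈ A) {j : ℕ}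
    (hj : 0 < j) : spow s (j * k) ∈ A := by
  induction j, hj using Nat.le_induction with
  | base => simpa using h
  | succ j hj ih =>
    rw [add_mul, one_mul, spow_add s (Nat.mul_pos hj hk) hk]
    exact A.mul_mem ih h

theorem spow_add_eq_of_le {a d : ℕ} (ha : 0 < a) (h : spow s (a + d) = spow s a) {q : ℕ}
    (hq : a ≤ q) : spow s (q + d) = spow s q := by
  induction q, hq using Nat.le_induction with
  | base => exact h
  | succ q hq ih => rw [add_right_comm, spow_succ s (by omega), ih, spow_succ s (by omega)]

theorem spow_add_mul_eq_of_le {a d : ℕ} (ha : 0 < a) (h : spow s (a + d) = spow s a) {q : ℕ}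
    (hq : a ≤ q) (c : ℕ) : spow s (q + c * d) = spow s q := by
  induction c with
  | zero => simp
  | succ c ih =>
    rw [add_mul, one_mul, ← add_assoc, spow_add_eq_of_le s ha h (by omega), ih]

variable {m n : ℕ} (hm : 0 < m) (heq : spow s (m + n) = spow s m)
include hm heq

theorem spow_eq_of_modEq {a b : ℕ} (ha : m ≤ a) (hb : m ≤ b) (h : a ≡ b [MOD n]) :
    spow s a = spow s b := by
  wlog hab : a ≤ b generalizing a b
  · exact (this hb ha h.symm (by omega)).symm
  obtain ⟨c, hc⟩ := (Nat.modEq_iff_dvd' hab).mp h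
  rw [show b = a + c * n by rw [mul_comm]; omega, spow_add_mul_eq_of_le s hm heq ha]

theorem spow_eq_spow_iff (hn : 0 < n)
    (hm_min : ∀ m' : ℕ, 0 < m' →
      (∃ n' : ℕ, 0 < n' ∧ spow s (m' + n') = spow s m') → m ≤ m')
    (hn_min : ∀ n' : ℕ, 0 < n' → spow s (m + n') = spow s m → n ≤ n') {a b : ℕ}
    (ha : 0 < a) (hb : 0 < b) :
    spow s a = spow s b ↔ a = b ∨ m ≤ a ∧ m ≤ b ∧ a ≡ b [MOD n] := by
  refine ⟨fun h => ?_, fun h => h.elim (· ▸ rfl) fun ⟨ha, hb, h⟩ =>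
    spow_eq_of_modEq s hm heq ha hb h⟩
  wlog hab : a < b generalizing a b
  · rcases (not_lt.mp hab).eq_or_lt with rfl | hba
    · exact Or.inl rfl
    · rcases this hb ha h.symm hba with h' | ⟨h1, h2, h3⟩
      exacts [Or.inl h'.symm, Or.inr ⟨h2, h1, h3.symm⟩]
  obtain ⟨d, rfl⟩ := Nat.exists_eq_add_of_lt hab
  have hd : spow s (a + (d + 1)) = spow s a := by rw [← add_assoc]; exact h.symm
  have hma : m ≤ a := hm_min a ha ⟨d + 1, d.succ_pos, hd⟩
  -- `m + a n` lies past both `a` and `m`, so both periods act there.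
  have hmd : spow s (m + (d + 1)) = spow s m := by
    calc spow s (m + (d + 1))
        = spow s (m + a * n + (d + 1)) := by
          rw [add_right_comm, spow_add_mul_eq_of_le s hm heq (by omega)]
      _ = spow s m := by
          rw [spow_add_eq_of_le s ha hd (by nlinarith), spow_add_mul_eq_of_le s hm heq le_rfl]
  have hr : (d + 1) % n = 0 := by
    by_contra hr
    have : spow s (m + (d + 1) % n) = spow s m := by
      rw [← hmd]
      exact spow_eq_of_modEq s hm heq (by omega) (by omega) ((Nat.mod_modEq _ n).add_left m)
    have := hn_min _ (Nat.pos_of_ne_zero hr) this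
    have := Nat.mod_lt (d + 1) hn
    omega
  refine Or.inr ⟨hma, by omega, (Nat.modEq_iff_dvd' (by omega)).mpr ?_⟩
  rw [show a + d + 1 - a = d + 1 by omega]
  exact Nat.dvd_of_mod_eq_zero hr

end spow

section rank

variable {S : Type*} [Semigroup S] (s : S) {m n : ℕ} [NeZero n] (hm : 0 < m)
  (heq : spow s (m + n) = spow s m)

/-- The offset `m * n` puts every representative past the index, so that this is
multiplicative. -/
def cyclicPart : Multiplicative (ZMod n) →ₙ* S where
  toFun z := spow s (m * n + z.toAdd.val)
  map_mul' a b := by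
    have hmn : 0 < m * n := Nat.mul_pos hm (Nat.pos_of_neZero n)
    rw [← spow_add s (by omega) (by omega)]
    refine spow_eq_of_modEq s hm heq (by nlinarith [Nat.pos_of_neZero n])
      (by nlinarith [Nat.pos_of_neZero n]) ?_
    rw [← ZMod.natCast_eq_natCast_iff]
    push_cast [toAdd_mul, ZMod.natCast_zmod_val, ZMod.natCast_self]
    ring

theorem cyclicPart_ofAdd_natCast {k : ℕ} (hk : m ≤ k) :
    cyclicPart s hm heq (.ofAdd (k : ZMod n)) = spow s k :=
  spow_eq_of_modEq s hm heq (by nlinarith [Nat.pos_of_neZero n]) hk (by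
    rw [← ZMod.natCast_eq_natCast_iff]
    push_cast [toAdd_ofAdd, ZMod.natCast_zmod_val, ZMod.natCast_self]
    ring)

open Classical in
noncomputable def lowPowers (m : ℕ) (A : Subsemigroup S) : Finset ℕ :=
  {k ∈ Finset.Ico 1 m | spow s k ∈ A}

noncomputable def subsemigroupRank (A : Subsemigroup S) : ℕ :=
  (lowPowers s m A).card + Ω (Nat.card (A.comap (cyclicPart s hm heq)))

variable (hgen : ∀ x : S, ∃ k : ℕ, 0 < k ∧ x = spow s k)
include hgen

theorem comap_cyclicPart_nonempty {A : Subsemigroup S} (hA : (A : Set S).Nonempty) :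
    (A.comap (cyclicPart s hm heq) : Set (Multiplicative (ZMod n))).Nonempty := by
  obtain ⟨x, hx⟩ := hA
  obtain ⟨k, hk, rfl⟩ := hgen x
  refine ⟨.ofAdd ((m * k : ℕ) : ZMod n), ?_⟩
  rw [SetLike.mem_coe, Subsemigroup.mem_comap,
    cyclicPart_ofAdd_natCast s hm heq (Nat.le_mul_of_pos_right m hk)]
  exact spow_mul_mem s hk hx hm

theorem eq_of_lowPowers_eq_of_comap_eq {A B : Subsemigroup S}
    (hlow : lowPowers s m A = lowPowers s m B)
    (hcyc : A.comap (cyclicPart s hm heq) = B.comap (cyclicPart s hm heq)) : A = B := by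
  ext x
  obtain ⟨k, hk, rfl⟩ := hgen x
  rcases lt_or_ge k m with hkm | hkm
  · have hk1 : 1 ≤ k := hk
    simpa [lowPowers, hk1, hkm] using congrArg (k ∈ ·) hlow
  · rw [← cyclicPart_ofAdd_natCast s hm heq hkm]
    exact SetLike.ext_iff.mp hcyc _

theorem subsemigroupRank_le {A : Subsemigroup S} (hA : (A : Set S).Nonempty) :
    subsemigroupRank s hm heq A ≤ m - 1 + Ω n := by
  have hlow : (lowPowers s m A).card ≤ m - 1 := by
    classical
    exact (Finset.card_filter_le _ _).trans (by simp)
  have hcyc := Subsemigroup.card_dvd_card (comap_cyclicPart_nonempty s hm heq hgen hA)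
  rw [Nat.card_eq_fintype_card (α := Multiplicative _), Fintype.card_multiplicative,
    ZMod.card] at hcyc
  exact add_le_add hlow (ArithmeticFunction.cardFactors_le_of_dvd_s5 hcyc (NeZero.ne n))

theorem subsemigroupRank_lt {A B : Subsemigroup S} (hA : (A : Set S).Nonempty) (hAB : A < B) :
    subsemigroupRank s hm heq A < subsemigroupRank s hm heq B := by
  have hlow : lowPowers s m A ⊆ lowPowers s m B := fun k hk => by
    simp only [lowPowers, Finset.mem_filter] at hk ⊢
    exact ⟨hk.1, hAB.le hk.2⟩
  have hcyc : A.comap (cyclicPart s hm heq) ≤ B.comap (cyclicPart s hm heq) :=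
    Subsemigroup.monotone_comap hAB.le
  have hA' := comap_cyclicPart_nonempty s hm heq hgen hA
  have hdvd := Subsemigroup.card_dvd_of_le hA' hcyc
  have hB' : 0 < Nat.card (B.comap (cyclicPart s hm heq)) :=
    have := (hA'.mono hcyc).to_subtype; Nat.card_pos
  unfold subsemigroupRank
  rcases (Finset.card_le_card hlow).lt_or_eq with hlt | hcard
  · have := ArithmeticFunction.cardFactors_le_of_dvd_s5 hdvd hB'.ne'
    omega
  · have hlow' := Finset.eq_of_subset_of_card_le hlow hcard.ge
    have hlt : A.comap (cyclicPart s hm heq) < B.comap (cyclicPart s hm heq) :=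
      hcyc.lt_of_ne fun h => hAB.ne (eq_of_lowPowers_eq_of_comap_eq s hm heq hgen hlow' h)
    have := ArithmeticFunction.cardFactors_lt_of_dvd_of_lt_s5 hdvd
      (Subsemigroup.card_lt_card_of_lt hlt)
    omega

end rank

section chain

variable {S : Type*} [Semigroup S] (s : S)

def spowMultiples (t d : ℕ) : Subsemigroup S where
  carrier := {x | ∃ k, 0 < k ∧ t ≤ k ∧ d ∣ k ∧ x = spow s k}
  mul_mem' := by
    rintro _ _ ⟨k, hk, htk, hdk, rfl⟩ ⟨l, hl, -, hdl, rfl⟩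
    exact ⟨k + l, by omega, by omega, dvd_add hdk hdl, (spow_add s hk hl).symm⟩

theorem spow_mem_spowMultiples {t d k : ℕ} (hk : 0 < k) (htk : t ≤ k) (hdk : d ∣ k) :
    spow s k ∈ spowMultiples s t d :=
  ⟨k, hk, htk, hdk, rfl⟩

theorem spowMultiples_nonempty {t d : ℕ} (ht : 0 < t) (hd : 0 < d) :
    (spowMultiples s t d : Set S).Nonempty :=
  ⟨_, spow_mem_spowMultiples s (Nat.mul_pos hd ht) (Nat.le_mul_of_pos_left t hd)
    (dvd_mul_right d t)⟩

theorem spowMultiples_mono {t t' d d' : ℕ} (ht : t' ≤ t) (hd : d' ∣ d) :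
    spowMultiples s t d ≤ spowMultiples s t' d' := by
  rintro _ ⟨k, hk, htk, hdk, rfl⟩
  exact ⟨k, hk, ht.trans htk, hd.trans hdk, rfl⟩

variable {m n : ℕ} (hm : 0 < m) (heq : spow s (m + n) = spow s m) (hn : 0 < n)
  (hm_min : ∀ m' : ℕ, 0 < m' →
    (∃ n' : ℕ, 0 < n' ∧ spow s (m' + n') = spow s m') → m ≤ m')
  (hn_min : ∀ n' : ℕ, 0 < n' → spow s (m + n') = spow s m → n ≤ n')
include hm heq hn hm_min hn_min

theorem spowMultiples_lt_of_prime {t t' p d : ℕ} (ht' : t' ≤ t) (hp : p.Prime)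
    (hpd : p * d ∣ n) : spowMultiples s t (p * d) < spowMultiples s t' d := by
  have hd : 0 < d := Nat.pos_of_dvd_of_pos (dvd_of_mul_left_dvd hpd) hn
  refine (spowMultiples_mono s ht' (dvd_mul_left d p)).lt_of_not_ge fun hle => ?_
  -- `d (p t + 1)` is divisible by `d` but not by `p d`; as `p d ∣ n`, divisibility by `p d`
  -- is invariant under the identifications `s ^ a = s ^ b`.
  have hwit : t' ≤ d * (p * t + 1) :=
    calc t' ≤ p * t := ht'.trans (Nat.le_mul_of_pos_left t hp.pos)
      _ ≤ d * (p * t + 1) := (Nat.le_succ _).trans (Nat.le_mul_of_pos_left _ hd)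
  obtain ⟨k, hk, -, hpdk, hspow⟩ :=
    hle (spow_mem_spowMultiples s (by positivity) hwit (dvd_mul_right _ _))
  have hpd' : d * p ∣ d * (p * t + 1) := by
    rw [mul_comm d p]
    rcases (spow_eq_spow_iff s hm heq hn hm_min hn_min (by positivity) hk).mp hspow with
      h | ⟨-, -, hmod⟩
    · exact h ▸ hpdk
    · exact Nat.modEq_zero_iff_dvd.mp
        ((hmod.of_dvd hpd).trans (Nat.modEq_zero_iff_dvd.mpr hpdk))
  have := (Nat.dvd_add_right (dvd_mul_right p t)).mp (Nat.dvd_of_mul_dvd_mul_left hd hpd')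
  exact hp.one_lt.ne' (Nat.dvd_one.mp this)

theorem spowMultiples_lt_of_lt_index {t : ℕ} (ht : 0 < t) (htm : t < m) :
    spowMultiples s (t + 1) 1 < spowMultiples s t 1 := by
  refine (spowMultiples_mono s t.le_succ dvd_rfl).lt_of_not_ge fun hle => ?_
  obtain ⟨k, hk, htk, -, hspow⟩ := hle (spow_mem_spowMultiples s ht le_rfl (one_dvd t))
  rcases (spow_eq_spow_iff s hm heq hn hm_min hn_min ht hk).mp hspow with rfl | ⟨hmt, -⟩ <;>
    omega

open ArithmeticFunction in
theorem exists_strictMono_chain :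
    ∃ c : Fin (m - 1 + Ω n + 1) → Subsemigroup S,
      StrictMono c ∧ ∀ i, (c i : Set S).Nonempty := by
  set L := n.primeFactorsList with hL
  have hLen : L.length = Ω n := cardFactors_apply.symm
  refine ⟨fun i => spowMultiples s (m + L.length - i) (L.drop i).prod,
    Fin.strictMono_iff_lt_succ.mpr fun i => ?_, fun i => spowMultiples_nonempty s (by omega)
      (Nat.pos_of_dvd_of_pos (Nat.prod_drop_primeFactorsList_dvd n i) hn)⟩
  simp only [Fin.val_castSucc, Fin.val_succ]
  rcases lt_or_ge i.val L.length with hi | hi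
  · have hdvd := Nat.prod_drop_primeFactorsList_dvd n i
    rw [← hL, List.drop_eq_getElem_cons hi, List.prod_cons] at hdvd
    rw [List.drop_eq_getElem_cons hi, List.prod_cons]
    exact spowMultiples_lt_of_prime s hm heq hn hm_min hn_min (by omega)
      (Nat.prime_of_mem_primeFactorsList (List.getElem_mem hi)) hdvd
  · rw [List.drop_eq_nil_of_le hi, List.drop_eq_nil_of_le (by omega), List.prod_nil]
    have := spowMultiples_lt_of_lt_index s hm heq hn hm_min hn_min
      (t := m + L.length - (i + 1)) (by omega) (by omega)
    rwa [show m + L.length - (i + 1) + 1 = m + L.length - i by omega] at this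

end chain

/-- Let `S` be a semigroup generated by a single element `s`, and let `m` and `n` be the
least positive integers such that `s ^ (m + n) = s ^ m`.  Then `l(S) = m + Ω(n) − 1`,
where `Ω(n)` is the number of prime divisors of `n` counted with multiplicity. -/
theorem semigroupLength_monogenic (S : Type*) [Semigroup S] (s : S)
    (hgen : ∀ x : S, ∃ k : ℕ, 0 < k ∧ x = spow s k)
    (m n : ℕ) (hm : 0 < m) (hn : 0 < n)
    (heq : spow s (m + n) = spow s m)
    (hm_min : ∀ m' : ℕ, 0 < m' → (∃ n' : ℕ, 0 < n' ∧ spow s (m' + n') = spow s m') → m ≤ m')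
    (hn_min : ∀ n' : ℕ, 0 < n' → spow s (m + n') = spow s m → n ≤ n') :
    semigroupLength S = m + n.primeFactorsList.length - 1 := by
  have : NeZero n := ⟨hn.ne'⟩
  obtain ⟨c, hc, hne⟩ := exists_strictMono_chain s hm heq hn hm_min hn_min
  rw [semigroupLength_eq_of_rank (subsemigroupRank s hm heq)
    (fun _ => subsemigroupRank_le s hm heq hgen) (fun _ _ => subsemigroupRank_lt s hm heq hgen)
    c hc hne, ArithmeticFunction.cardFactors_apply]
  omega
end

section
/- There exists a function f : ℕ → ℝ with f(n)/n^{n−1/3} → 0 as n → ∞, such that for all n the length of the full transformation semigroup T_n satisfies l(T_n) ≥ e^{−2} n^n − 2e^{−2}(1 − e^{−1}) n^{n−1/3} − f(n). -/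
open Real Filter

/-!
The rank of a map (the size of its image) never increases under composition. Fix a point `a`
and let `A` be the maps that miss `a` and take the value `x a` only at `a`. For `x, y ∈ A` the
image of `x ∘ y` misses `x a`, so a product of two elements of `A` has smaller rank than its left
factor. Listing `A` by increasing rank and adding its elements one at a time to the set of maps
of smaller rank therefore gives a strictly increasing chain of subsemigroups, topped by `T_n`,
so `l(T_n) ≥ |A| = (n - 1)(n - 2)^(n - 1)`. Finally `1 + x ≤ eˣ` gives
`(n - 1)(n - 2)^(n - 1) ≥ e⁻² (n^n - 4 n^(n - 1))`, and `n^(n - 1) = o(n^(n - 1/3))`.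
-/

open Finset

section RankChain

variable {M : Type*} [Mul M]

theorem card_le_semigroupLength_add_one [Finite M] {ι : Type*} [LinearOrder ι] [Fintype ι]
    (c : ι → Subsemigroup M) (hc : StrictMono c) (hne : ∀ i, (c i : Set M).Nonempty) :
    Fintype.card ι ≤ semigroupLength M + 1 := by
  obtain hι | hι := Nat.eq_zero_or_pos (Fintype.card ι)
  · omega
  have hbdd : BddAbove {k : ℕ | ∃ c : Fin (k + 1) → Subsemigroup M,
      StrictMono c ∧ ∀ i, (c i : Set M).Nonempty} := by
    refine ⟨Nat.card (Subsemigroup M), ?_⟩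
    rintro k ⟨c, hc, -⟩
    exact (by simpa using Nat.card_le_card_of_injective c hc.injective : k < _).le
  let e := Fintype.orderIsoFinOfCardEq ι (Nat.succ_pred_eq_of_pos hι).symm
  have : Fintype.card ι - 1 ≤ semigroupLength M :=
    le_csSup hbdd ⟨c ∘ e, hc.comp e.strictMono, fun i => hne (e i)⟩
  omega

variable (r : M → ℕ)

def Subsemigroup.rankLtUnion (hleft : ∀ x y, r (x * y) ≤ r x) (hright : ∀ x y, r (x * y) ≤ r y)
    (k : ℕ) (T : Set M) (hT : ∀ x ∈ T, ∀ y ∈ T, r (x * y) < k) : Subsemigroup M where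
  carrier := {y | r y < k} ∪ T
  mul_mem' := by
    rintro x y (hx | hx) (hy | hy)
    · exact Or.inl ((hleft x y).trans_lt hx)
    · exact Or.inl ((hleft x y).trans_lt hx)
    · exact Or.inl ((hright x y).trans_lt hy)
    · exact Or.inl (hT x hx y hy)

theorem card_le_semigroupLength_of_rank [Finite M] (hleft : ∀ x y, r (x * y) ≤ r x)
    (hright : ∀ x y, r (x * y) ≤ r y) (A : Finset M) (hA : ∀ x ∈ A, ∀ y ∈ A, r (x * y) < r x)
    {z : M} (hz : ∀ x ∈ A, r x < r z) : #A ≤ semigroupLength M := by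
  classical
  obtain ⟨n, ⟨e⟩⟩ := Finite.exists_equiv_fin M
  -- break ties in rank by an arbitrary enumeration of `M`
  let : LinearOrder M := LinearOrder.lift' (fun x => toLex (r x, e x)) fun x y h => by
    simpa using congrArg (fun p => (ofLex p).2) h
  have hr : Monotone r := fun x y hxy => by
    rcases Prod.Lex.le_iff.mp hxy with h | h
    · exact h.le
    · exact h.1.le
  let c : WithTop A → Subsemigroup M := fun t => t.recTopCoe ⊤ fun a =>
    Subsemigroup.rankLtUnion r hleft hright (r a) {y | y ∈ A ∧ y ≤ a} fun x hx y hy =>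
      (hA x hx.1 y hy.1).trans_le (hr hx.2)
  have hrank : ∀ (a : A) y, y ∈ c a → r y ≤ r a := by
    rintro a y (hy | hy)
    exacts [hy.le, hr hy.2]
  have hc : StrictMono c := by
    refine WithTop.strictMono_iff.mpr ⟨fun a b hab => ?_, fun a => ?_⟩
    · refine SetLike.lt_iff_le_and_exists.mpr ⟨?_, b.1, Or.inr ⟨b.2, le_rfl⟩, ?_⟩
      · rintro y (hy | hy)
        exacts [Or.inl (hy.trans_le (hr hab.le)), Or.inr ⟨hy.1, hy.2.trans hab.le⟩]
      · rintro (hb | hb)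
        exacts [(hr hab.le).not_gt hb, hab.not_ge hb.2]
    · exact SetLike.lt_iff_le_and_exists.mpr
        ⟨le_top, z, trivial, fun hz' => (hz a a.2).not_ge (hrank a z hz')⟩
  have hne : ∀ t, (c t : Set M).Nonempty := by
    intro t
    induction t using WithTop.recTopCoe with
    | top => exact ⟨z, trivial⟩
    | coe a => exact ⟨a, Or.inr ⟨a.2, le_rfl⟩⟩
  have := card_le_semigroupLength_add_one c hc hne
  rw [show Fintype.card (WithTop A) = #A + 1 from Fintype.card_option.trans (by simp)] at this
  omega

end RankChain

namespace Function

def rank {α β : Type*} [Fintype α] [DecidableEq β] (f : α → β) : ℕ := #(univ.image f)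

theorem rank_comp_le_left {α β γ : Type*} [Fintype α] [Fintype β] [DecidableEq γ]
    (f : β → γ) (g : α → β) : rank (f ∘ g) ≤ rank f :=
  card_le_card fun _ h => by
    obtain ⟨i, -, rfl⟩ := mem_image.mp h
    exact mem_image_of_mem f (mem_univ (g i))

theorem rank_comp_le_right {α β γ : Type*} [Fintype α] [DecidableEq β] [DecidableEq γ]
    (f : β → γ) (g : α → β) : rank (f ∘ g) ≤ rank g := by
  rw [rank, rank, ← image_image]
  exact card_image_le

variable {α : Type*} [Fintype α] [DecidableEq α]

theorem rank_id : rank (id : α → α) = Fintype.card α := by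
  simp [rank]

def avoiding (a : α) : Finset (α → α) :=
  {x | ∀ i, x i ≠ a ∧ (i ≠ a → x i ≠ x a)}

variable {a : α}

theorem rank_comp_lt_of_mem_avoiding {x y : α → α} (hx : x ∈ avoiding a)
    (hy : y ∈ avoiding a) : rank (x ∘ y) < rank x := by
  simp only [avoiding, mem_filter, mem_univ, true_and] at hx hy
  refine card_lt_card ((ssubset_iff_of_subset fun _ h => ?_).mpr ⟨x a, ?_, ?_⟩)
  · obtain ⟨i, -, rfl⟩ := mem_image.mp h
    exact mem_image_of_mem x (mem_univ (y i))
  · exact mem_image_of_mem x (mem_univ a)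
  · intro h
    obtain ⟨i, -, hi⟩ := mem_image.mp h
    exact (hx (y i)).2 (hy i).1 hi

theorem rank_lt_card_of_mem_avoiding {x : α → α} (hx : x ∈ avoiding a) :
    rank x < Fintype.card α := by
  simp only [avoiding, mem_filter, mem_univ, true_and] at hx
  refine (card_lt_card (ssubset_univ_iff.mpr fun h => ?_)).trans_eq card_univ
  obtain ⟨i, -, hi⟩ := mem_image.mp (h ▸ mem_univ a)
  exact (hx i).1 hi

theorem card_avoiding (a : α) :
    #(avoiding a) = (Fintype.card α - 1) * (Fintype.card α - 2) ^ (Fintype.card α - 1) := by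
  -- the maps in `avoiding a` with `x a = v` form the box `∏ i, t v i`
  let t : α → α → Finset α := fun v i => if i = a then {v} else (univ.erase a).erase v
  have hsplit : avoiding a = (univ.erase a).biUnion fun v => Fintype.piFinset (t v) := by
    ext x
    simp only [avoiding, t, mem_filter, mem_univ, true_and, mem_biUnion, mem_erase, and_true,
      Fintype.mem_piFinset]
    constructor
    · intro hx
      refine ⟨x a, (hx a).1, fun i => ?_⟩
      split_ifs with hi
      · simp [hi]
      · simp [(hx i).1, (hx i).2 hi]
    · rintro ⟨v, hv, hx⟩
      have hxa : x a = v := by simpa using hx a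
      intro i
      by_cases hi : i = a
      · subst hi; simp [hxa, hv]
      · have := hx i
        simp only [hi, if_false, mem_erase, mem_univ, and_true] at this
        exact ⟨this.2, fun _ => hxa ▸ this.1⟩
  have hdisj : (univ.erase a : Set α).PairwiseDisjoint fun v => Fintype.piFinset (t v) := by
    intro v _ w _ hvw
    refine disjoint_left.mpr fun x hv hw => hvw ?_
    have h1 := Fintype.mem_piFinset.mp hv a
    have h2 := Fintype.mem_piFinset.mp hw a
    simp only [t, if_true, mem_singleton] at h1 h2
    exact h1.symm.trans h2
  have hbox : ∀ v ∈ univ.erase a,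
      ∏ i, #(t v i) = (Fintype.card α - 2) ^ (Fintype.card α - 1) := by
    intro v hv
    have hcard : #((univ.erase a).erase v) = Fintype.card α - 2 := by
      rw [card_erase_of_mem hv, card_erase_of_mem (mem_univ a), card_univ]
      omega
    simp only [t, apply_ite card, card_singleton, hcard, prod_ite, prod_const_one, one_mul,
      prod_const, filter_ne', card_erase_of_mem (mem_univ a), card_univ]
  rw [hsplit, card_biUnion hdisj,
    sum_congr rfl fun v hv => (Fintype.card_piFinset _).trans (hbox v hv),
    sum_const, card_erase_of_mem (mem_univ a), card_univ, smul_eq_mul]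

end Function

open Function in
theorem le_semigroupLength_end (α : Type*) [Fintype α] :
    (Fintype.card α - 1) * (Fintype.card α - 2) ^ (Fintype.card α - 1) ≤
      semigroupLength (Function.End α) := by
  classical
  cases isEmpty_or_nonempty α
  · simp [Fintype.card_eq_zero]
  obtain ⟨a⟩ := ‹Nonempty α›
  have : Finite (Function.End α) := inferInstanceAs (Finite (α → α))
  rw [← card_avoiding a]
  exact card_le_semigroupLength_of_rank (M := Function.End α) rank rank_comp_le_left
    rank_comp_le_right (avoiding a) (fun x hx y hy => rank_comp_lt_of_mem_avoiding hx hy)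
    (z := 1) fun x hx => (rank_lt_card_of_mem_avoiding hx).trans_eq rank_id.symm

theorem exp_neg_two_mul_sub_le_of_two_le {m : ℕ} (hm : 2 ≤ m) :
    exp (-2) * ((m + 2 : ℝ) ^ (m + 2) - 4 * (m + 2) ^ (m + 1)) ≤ (m + 1) * (m : ℝ) ^ (m + 1) := by
  have hm0 : (0 : ℝ) < m := by positivity
  set X := exp (-2) * (m + 2 : ℝ) ^ (m + 1)
  have hpow : (m + 2 : ℝ) ^ (m + 1) ≤ m ^ (m + 1) * exp (2 + 2 / m) := calc
    (m + 2 : ℝ) ^ (m + 1) = (m * (2 / m + 1)) ^ (m + 1) := by field_simp; ring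
    _ ≤ (m * exp (2 / m)) ^ (m + 1) := by gcongr; exact add_one_le_exp _
    _ = m ^ (m + 1) * exp (2 + 2 / m) := by
      rw [mul_pow, ← exp_nat_mul]; congr 2; push_cast; field_simp
  have hX : X ≤ m ^ (m + 1) * exp (2 / m) := calc
    X ≤ exp (-2) * (m ^ (m + 1) * exp (2 + 2 / m)) :=
      mul_le_mul_of_nonneg_left hpow (exp_pos _).le
    _ = m ^ (m + 1) * exp (2 / m) * exp (-2 + 2) := by rw [exp_add, exp_add]; ring
    _ = m ^ (m + 1) * exp (2 / m) := by norm_num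
  have hX' : X * (m - 2) ≤ m * m ^ (m + 1) := calc
    X * (m - 2) = m * (X * (1 - 2 / m)) := by field_simp
    _ ≤ m * (X * exp (-(2 / m))) := by
      gcongr; linarith [add_one_le_exp (-(2 / m))]
    _ ≤ m * (m ^ (m + 1) * exp (2 / m) * exp (-(2 / m))) := by gcongr
    _ = m * m ^ (m + 1) := by rw [mul_assoc, ← exp_add, add_neg_cancel, exp_zero, mul_one]
  calc exp (-2) * ((m + 2 : ℝ) ^ (m + 2) - 4 * (m + 2) ^ (m + 1)) = X * (m - 2) := by ring
    _ ≤ (m + 1) * (m : ℝ) ^ (m + 1) := by nlinarith [pow_pos hm0 (m + 1)]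

theorem exp_neg_two_mul_sub_le (n : ℕ) :
    exp (-2) * ((n : ℝ) ^ n - 4 * (n : ℝ) ^ (n - 1)) ≤ ((n - 1) * (n - 2) ^ (n - 1) : ℕ) := by
  obtain hn | ⟨m, hm, rfl⟩ : n ≤ 4 ∨ ∃ m, 2 ≤ m ∧ n = m + 2 := by
    rcases le_or_gt n 4 with hn | hn
    exacts [Or.inl hn, Or.inr ⟨n - 2, by omega, by omega⟩]
  · have hneg : (n : ℝ) ^ n - 4 * (n : ℝ) ^ (n - 1) ≤ 0 := by interval_cases n <;> norm_num
    exact (mul_nonpos_of_nonneg_of_nonpos (exp_pos _).le hneg).trans (Nat.cast_nonneg _)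
  · simpa using exp_neg_two_mul_sub_le_of_two_le hm

theorem tendsto_pow_pred_div_rpow :
    Tendsto (fun n : ℕ => (n : ℝ) ^ (n - 1) / (n : ℝ) ^ ((n : ℝ) - 1 / 3)) atTop (nhds 0) := by
  refine ((tendsto_rpow_neg_atTop (by norm_num : (0 : ℝ) < 2 / 3)).comp
    tendsto_natCast_atTop_atTop).congr' ?_
  filter_upwards [eventually_ge_atTop 1] with n hn
  have hn0 : (0 : ℝ) < n := by exact_mod_cast hn
  rw [Function.comp_apply, ← Real.rpow_natCast, Nat.cast_sub hn, ← Real.rpow_sub hn0]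
  norm_num

/-- There is a function `f : ℕ → ℝ` with `f(n)/n^(n−1/3) → 0` as `n → ∞` such that the
length of the full transformation semigroup `T_n` (all maps of an `n`-set to itself,
under composition) satisfies
`l(T_n) ≥ e⁻² n^n − 2e⁻²(1 − e⁻¹) n^(n−1/3) − f(n)` for all `n`. -/
theorem semigroupLength_fullTransformationSemigroup :
    ∃ f : ℕ → ℝ,
      Tendsto (fun n : ℕ => f n / (n : ℝ) ^ ((n : ℝ) - 1 / 3)) atTop (nhds 0) ∧
      ∀ n : ℕ,
        (semigroupLength (Function.End (Fin n)) : ℝ) ≥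
          Real.exp (-2) * (n : ℝ) ^ (n : ℝ) -
            2 * Real.exp (-2) * (1 - Real.exp (-1)) * (n : ℝ) ^ ((n : ℝ) - 1 / 3) - f n := by
  -- the truncated exponent `n - 1` makes `f 0 = 4 e⁻²`, which the case `n = 0` needs
  refine ⟨fun n => 4 * exp (-2) * (n : ℝ) ^ (n - 1), ?_, fun n => ?_⟩
  · simpa [mul_div_assoc] using tendsto_pow_pred_div_rpow.const_mul (4 * exp (-2))
  have hlen : (((n - 1) * (n - 2) ^ (n - 1) : ℕ) : ℝ) ≤ semigroupLength (Function.End (Fin n)) := by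
    exact_mod_cast Fintype.card_fin n ▸ le_semigroupLength_end (Fin n)
  have herr : 0 ≤ 2 * exp (-2) * (1 - exp (-1)) * (n : ℝ) ^ ((n : ℝ) - 1 / 3) :=
    mul_nonneg (mul_nonneg (by positivity) (sub_nonneg.mpr (exp_le_one_iff.mpr (by norm_num))))
      (rpow_nonneg n.cast_nonneg _)
  rw [rpow_natCast]
  linarith [exp_neg_two_mul_sub_le n]
end

section
/- For every positive integer n, the length of the full transformation semigroup satisfies l(T_n) ≥ (∑_{k=1}^n F(n,k)·k!) − 1, where F(n,k) is the largest content of a league of rank k on {1,...,n}. -/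
/-- `A` is a transversal of the partition `Q` of `{1,…,n}` if it contains exactly one
element of each part of `Q`. -/
def IsTransversal {n : ℕ} (A : Finset (Fin n))
    (Q : Finpartition (Finset.univ : Finset (Fin n))) : Prop :=
  ∀ p ∈ Q.parts, (A ∩ p).card = 1

/-- A league of rank `k` on `{1,…,n}`: a pair `(P, T)` where `P` is a set of partitions
of `{1,…,n}` into `k` parts and `T` is a set of `k`-element subsets of `{1,…,n}`, such
that no member of `T` is a transversal of any member of `P`. -/
def IsLeague (n k : ℕ) (P : Set (Finpartition (Finset.univ : Finset (Fin n))))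
    (T : Set (Finset (Fin n))) : Prop :=
  (∀ Q ∈ P, Q.parts.card = k) ∧ (∀ A ∈ T, A.card = k) ∧
    ∀ Q ∈ P, ∀ A ∈ T, ¬ IsTransversal A Q

/-- `F(n,k)`: the largest content `|P|·|T|` of a league `(P, T)` of rank `k` on
`{1,…,n}`. -/
noncomputable def leagueF (n k : ℕ) : ℕ :=
  sSup {m : ℕ | ∃ P T, IsLeague n k P T ∧ m = P.ncard * T.ncard}

/-!
The rank `#(univ.image f)` of a transformation does not increase under composition on either
side. Hence if `X` is a set of transformations in which any two elements of equal rank have a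
product of smaller rank, then adjoining the elements of `X` one at a time, in order of increasing
rank, to the set of all transformations of rank below the current one yields a strictly increasing
chain of `#X` subsemigroups.

For a league `(P, S)` of rank `k`, take the maps of rank `k` whose kernel lies in `P` and whose
image lies in `S`; there are at least `|P|·|S|·k!` of them, one for each `Q ∈ P`, `A ∈ S` and
bijection from the parts of `Q` onto `A`. The product `f ∘ g` of two of them has rank `k` only if
the image of `g` is a transversal of the kernel of `f`, which the league forbids. Taking the union
over `k` of optimal leagues gives the bound.
-/

open Finset Nat

section Length

variable {M : Type*} [Mul M]

theorem le_semigroupLength [Finite M] {k : ℕ} {c : Fin (k + 1) → Subsemigroup M}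
    (hc : StrictMono c) (hne : ∀ i, (c i : Set M).Nonempty) : k ≤ semigroupLength M := by
  have : Finite (Subsemigroup M) := Finite.of_injective _ SetLike.coe_injective
  refine le_csSup ⟨Nat.card (Subsemigroup M), ?_⟩ ⟨c, hc, hne⟩
  rintro j ⟨c', hc', -⟩
  have := Nat.card_le_card_of_injective c' hc'.injective
  rw [Nat.card_eq_fintype_card, Fintype.card_fin] at this
  omega

theorem length_sub_one_le_semigroupLength [Finite M] {l : List (Subsemigroup M)}
    (hl : l.SortedLT) (hne : ∀ S ∈ l, (S : Set M).Nonempty) :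
    l.length - 1 ≤ semigroupLength M := by
  obtain _ | ⟨S, l⟩ := l
  · exact Nat.zero_le _
  · exact le_semigroupLength hl.strictMono_get fun i => hne _ (List.getElem_mem _)

end Length

section RankFunction

variable {M α : Type*} [Mul M] [LinearOrder α] {ρ : M → α}

theorem exists_subsemigroup_coe_eq_sublevel_union (hρ : ∀ a b, ρ (a * b) ≤ min (ρ a) (ρ b))
    {r : α} {Y : Set M} (hYr : ∀ y ∈ Y, ρ y ≤ r)
    (hY : ∀ x ∈ Y, ∀ y ∈ Y, ρ x = ρ y → ρ (x * y) < ρ x) :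
    ∃ S : Subsemigroup M, (S : Set M) = {m | ρ m < r} ∪ Y := by
  refine ⟨⟨{m | ρ m < r} ∪ Y, fun {a b} ha hb => ?_⟩, rfl⟩
  have hab := le_min_iff.1 (hρ a b)
  by_cases hlt : ρ a < r ∨ ρ b < r
  · exact Or.inl (hlt.elim hab.1.trans_lt hab.2.trans_lt)
  · rw [not_or, not_lt, not_lt] at hlt
    have ha : a ∈ Y := ha.resolve_left hlt.1.not_gt
    have hb : b ∈ Y := hb.resolve_left hlt.2.not_gt
    have hra : ρ a = r := (hYr a ha).antisymm hlt.1
    have hrb : ρ b = r := (hYr b hb).antisymm hlt.2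
    exact Or.inl (hra ▸ hY a ha b hb (hra.trans hrb.symm))

theorem exists_sortedLT_subsemigroups (hρ : ∀ a b, ρ (a * b) ≤ min (ρ a) (ρ b))
    (X : Finset M)
    (hX : ∀ x ∈ X, ∀ y ∈ X, ρ x = ρ y → ρ (x * y) < ρ x) :
    ∃ l : List (Subsemigroup M), l.length = #X ∧ l.SortedLT ∧
      ∀ S ∈ l, (S : Set M).Nonempty ∧
        (S : Set M) ⊆ {m | ∃ x ∈ X, ρ m < ρ x} ∪ X := by
  classical
  induction X using Finset.induction_on_max_value ρ with
  | empty => exact ⟨[], rfl, List.Pairwise.nil.sortedLT, by simp⟩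
  | insert a X haX hmax ih =>
    obtain ⟨l, hlen, hl, hlX⟩ :=
      ih fun x hx y hy => hX x (mem_insert_of_mem hx) y (mem_insert_of_mem hy)
    obtain ⟨S, hS⟩ := exists_subsemigroup_coe_eq_sublevel_union hρ (r := ρ a)
      (Y := ↑(insert a X)) (by simpa using hmax) (by simpa using hX)
    have haS : a ∈ (S : Set M) := by simp [hS]
    have hold : {m | ∃ x ∈ X, ρ m < ρ x} ∪ ↑X ⊆ (S : Set M) := by
      rw [hS]
      rintro m (⟨x, hx, hmx⟩ | hm)
      · exact Or.inl (hmx.trans_le (hmax x hx))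
      · exact Or.inr (mem_insert_of_mem hm)
    have haold : a ∉ {m | ∃ x ∈ X, ρ m < ρ x} ∪ ↑X := by
      rintro (⟨x, hx, hax⟩ | ha)
      · exact (hax.trans_le (hmax x hx)).false
      · exact haX ha
    refine ⟨l ++ [S], by simp [hlen, haX], ?_, ?_⟩
    · refine List.Pairwise.sortedLT (List.pairwise_append.2 ⟨hl.pairwise, by simp, ?_⟩)
      simp only [List.mem_singleton, forall_eq]
      intro T hT
      exact SetLike.lt_iff_le_and_exists.2 ⟨fun m hm => hold ((hlX T hT).2 hm),
        a, haS, fun h => haold ((hlX T hT).2 h)⟩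
    · simp only [List.mem_append, List.mem_singleton]
      rintro T (hT | rfl)
      · refine ⟨(hlX T hT).1, (hlX T hT).2.trans (Set.union_subset_union ?_ ?_)⟩
        · exact fun m ⟨x, hx, hmx⟩ => ⟨x, mem_insert_of_mem hx, hmx⟩
        · simp [Set.subset_insert]
      · exact ⟨⟨a, haS⟩, hS ▸ Set.union_subset_union_left _
          fun m hm => ⟨a, mem_insert_self a X, hm⟩⟩

theorem card_sub_one_le_semigroupLength [Finite M] (hρ : ∀ a b, ρ (a * b) ≤ min (ρ a) (ρ b))
    (X : Finset M) (hX : ∀ x ∈ X, ∀ y ∈ X, ρ x = ρ y → ρ (x * y) < ρ x) :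
    #X - 1 ≤ semigroupLength M := by
  obtain ⟨l, hlen, hl, hlX⟩ := exists_sortedLT_subsemigroups hρ X hX
  exact hlen ▸ length_sub_one_le_semigroupLength hl fun S hS => (hlX S hS).1

end RankFunction

theorem Finpartition.parts_eq_image_part {α : Type*} [Fintype α] [DecidableEq α]
    (Q : Finpartition (univ : Finset α)) : Q.parts = univ.image Q.part := by
  ext p
  simp only [mem_image, mem_univ, true_and]
  exact ⟨fun hp => (Q.part_surjOn hp).imp fun _ h => h.2,
    by rintro ⟨x, rfl⟩; exact Q.part_mem.2 (mem_univ x)⟩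

section KernelPartition

variable {α β : Type*} [Fintype α] [DecidableEq α] [DecidableEq β]

noncomputable def kerPartition (f : α → β) : Finpartition (univ : Finset α) :=
  letI : DecidableRel (Setoid.ker f).r := fun a b => decidable_of_iff (f a = f b) Iff.rfl
  Finpartition.ofSetoid (Setoid.ker f)

theorem mem_part_kerPartition {f : α → β} {a b : α} :
    b ∈ (kerPartition f).part a ↔ f a = f b := by
  let : DecidableRel (Setoid.ker f).r := fun a b => decidable_of_iff (f a = f b) Iff.rfl
  exact Finpartition.mem_part_ofSetoid_iff_rel

theorem part_kerPartition (f : α → β) (a : α) :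
    (kerPartition f).part a = ({b | f b = f a} : Finset α) := by
  ext b
  simp [mem_part_kerPartition, eq_comm]

theorem card_parts_kerPartition (f : α → β) :
    #(kerPartition f).parts = #(univ.image f) := by
  have hfib : univ.image (kerPartition f).part =
      (univ.image f).image fun y => ({b | f b = y} : Finset α) := by
    rw [image_image]
    exact image_congr fun a _ => part_kerPartition f a
  rw [Finpartition.parts_eq_image_part, hfib]
  refine card_image_of_injOn fun y hy y' _ hyy' => ?_
  obtain ⟨a, -, rfl⟩ := mem_image.1 hy
  simpa using (Finset.ext_iff.1 hyy' a).1 (by simp)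

theorem kerPartition_eq {f : α → β} {Q : Finpartition (univ : Finset α)}
    (h : ∀ a b, f a = f b ↔ Q.part a = Q.part b) : kerPartition f = Q := by
  have hpart : (kerPartition f).part = Q.part := by
    ext a b
    rw [mem_part_kerPartition, h, Q.mem_part_iff_part_eq_part (mem_univ b) (mem_univ a), eq_comm]
  ext p
  rw [Finpartition.parts_eq_image_part, Finpartition.parts_eq_image_part, hpart]

end KernelPartition

namespace Finpartition

variable {α β : Type*} [Fintype α] [DecidableEq α]
  (Q : Finpartition (univ : Finset α)) {A : Finset β}

def collapse (e : Q.parts ≃ A) (x : α) : β :=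
  e ⟨Q.part x, Q.part_mem.2 (mem_univ x)⟩

theorem collapse_eq_collapse_iff (e : Q.parts ≃ A) {x y : α} :
    Q.collapse e x = Q.collapse e y ↔ Q.part x = Q.part y := by
  simp [collapse, e.injective.eq_iff]

theorem kerPartition_collapse [DecidableEq β] (e : Q.parts ≃ A) :
    kerPartition (Q.collapse e) = Q :=
  kerPartition_eq fun _ _ => Q.collapse_eq_collapse_iff e

theorem image_collapse [DecidableEq β] (e : Q.parts ≃ A) : univ.image (Q.collapse e) = A := by
  refine Subset.antisymm (fun b hb => ?_) fun b hb => ?_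
  · obtain ⟨x, -, rfl⟩ := mem_image.1 hb
    exact (e _).2
  · obtain ⟨x, hx⟩ := Q.nonempty_of_mem_parts (e.symm ⟨b, hb⟩).2
    refine mem_image.2 ⟨x, mem_univ x, ?_⟩
    simp [collapse, Q.part_eq_of_mem (e.symm ⟨b, hb⟩).2 hx]

theorem collapse_injective : Function.Injective (Q.collapse (A := A)) := by
  intro e e' h
  ext ⟨p, hp⟩
  obtain ⟨x, hx⟩ := Q.nonempty_of_mem_parts hp
  have := congrFun h x
  simp only [collapse, Q.part_eq_of_mem hp hx] at this
  rw [this]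

end Finpartition

theorem card_image_comp_le_min {α β γ : Type*} [Fintype α] [DecidableEq β] [Fintype β]
    [DecidableEq γ] (f : β → γ) (g : α → β) :
    #(univ.image (f ∘ g)) ≤ min #(univ.image f) #(univ.image g) := by
  rw [← image_image]
  exact le_min (card_le_card (image_subset_image (subset_univ _))) card_image_le

noncomputable def leagueMaps {α β : Type*} [Fintype α] [DecidableEq α] [Fintype β]
    [DecidableEq β] (P : Finset (Finpartition (univ : Finset α))) (T : Finset (Finset β)) :
    Finset (α → β) :=
  {f | kerPartition f ∈ P ∧ univ.image f ∈ T}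

theorem card_mul_card_mul_factorial_le_card_leagueMaps {α β : Type*} [Fintype α] [DecidableEq α]
    [Fintype β] [DecidableEq β] {k : ℕ} {P : Finset (Finpartition (univ : Finset α))}
    {T : Finset (Finset β)} (hP : ∀ Q ∈ P, #Q.parts = k) (hT : ∀ A ∈ T, #A = k) :
    #P * #T * k ! ≤ #(leagueMaps P T) := by
  classical
  rw [card_eq_sum_card_fiberwise (f := fun f => (kerPartition f, univ.image f)) (t := P ×ˢ T)
    fun f hf => by simpa [leagueMaps] using hf, ← card_product, ← smul_eq_mul, ← sum_const]
  refine sum_le_sum fun ⟨Q, A⟩ hQA => ?_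
  rw [mem_product] at hQA
  have e₀ : Q.parts ≃ A := Fintype.equivOfCardEq (by simp [hP Q hQA.1, hT A hQA.2])
  calc k ! = #(univ : Finset (Q.parts ≃ A)) := by
        rw [Finset.card_univ, Fintype.card_equiv e₀, Fintype.card_coe, hP Q hQA.1]
    _ ≤ _ := card_le_card_of_injOn Q.collapse
        (fun e _ => by
          simp [leagueMaps, Finpartition.kerPartition_collapse, Finpartition.image_collapse, hQA])
        Q.collapse_injective.injOn

section League

variable {n k : ℕ} {P : Finset (Finpartition (univ : Finset (Fin n)))}
  {T : Finset (Finset (Fin n))}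

theorem card_image_lt_of_not_isTransversal {β : Type*} [DecidableEq β] {f : Fin n → β}
    {A : Finset (Fin n)} (hA : #A = #(kerPartition f).parts)
    (h : ¬IsTransversal A (kerPartition f)) : #(A.image f) < #A := by
  refine card_image_le.lt_of_ne fun himg => h fun p hp => ?_
  have hinj : Set.InjOn f A := card_image_iff.1 himg
  have hsurj : A.image f = univ.image f :=
    eq_of_subset_of_card_le (image_subset_image (subset_univ A))
      (by rw [himg, hA, card_parts_kerPartition])
  rw [Finpartition.parts_eq_image_part] at hp
  obtain ⟨a, -, rfl⟩ := mem_image.1 hp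
  obtain ⟨b, hb, hba⟩ := mem_image.1 (hsurj ▸ mem_image_of_mem f (mem_univ a))
  refine card_eq_one.2 ⟨b, ext fun c => ?_⟩
  simp only [part_kerPartition, mem_inter, mem_filter, mem_univ, true_and, mem_singleton]
  exact ⟨fun ⟨hc, hca⟩ => hinj hc hb (hca.trans hba.symm),
    by rintro rfl; exact ⟨hb, hba⟩⟩

theorem card_image_eq_of_mem_leagueMaps (hL : IsLeague n k ↑P ↑T) {f : Fin n → Fin n}
    (hf : f ∈ leagueMaps P T) : #(univ.image f) = k :=
  hL.2.1 _ (mem_filter.1 hf).2.2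

theorem card_image_comp_lt_of_mem_leagueMaps (hL : IsLeague n k ↑P ↑T) {f g : Fin n → Fin n}
    (hf : f ∈ leagueMaps P T) (hg : g ∈ leagueMaps P T) : #(univ.image (f ∘ g)) < k := by
  simp only [leagueMaps, mem_filter, mem_univ, true_and] at hf hg
  rw [← image_image, ← hL.2.1 _ hg.2]
  exact card_image_lt_of_not_isTransversal (by rw [hL.2.1 _ hg.2, hL.1 _ hf.1])
    (hL.2.2 _ hf.1 _ hg.2)

end League

theorem exists_finset_isLeague_leagueF_eq (n k : ℕ) :
    ∃ (P : Finset (Finpartition (univ : Finset (Fin n)))) (T : Finset (Finset (Fin n))),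
      IsLeague n k ↑P ↑T ∧ leagueF n k = #P * #T := by
  obtain ⟨P, T, hL, hF⟩ :
      leagueF n k ∈ {m | ∃ P T, IsLeague n k P T ∧ m = P.ncard * T.ncard} :=
    Nat.sSup_mem ⟨0, ∅, ∅, by simp [IsLeague]⟩
      ⟨_, by
        rintro _ ⟨P, T, -, rfl⟩
        exact Nat.mul_le_mul (Set.ncard_le_card P) (Set.ncard_le_card T)⟩
  rw [Set.ncard_eq_toFinset_card P, Set.ncard_eq_toFinset_card T] at hF
  exact ⟨P.toFinite.toFinset, T.toFinite.toFinset, by simpa using hL, hF⟩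

section LeagueFamily

variable {n : ℕ} {P : ℕ → Finset (Finpartition (univ : Finset (Fin n)))}
  {T : ℕ → Finset (Finset (Fin n))}

theorem pairwiseDisjoint_leagueMaps (hL : ∀ k, IsLeague n k ↑(P k) ↑(T k)) (s : Set ℕ) :
    s.PairwiseDisjoint fun k => leagueMaps (P k) (T k) :=
  fun k _ l _ hkl => disjoint_left.2 fun _ hfk hfl => hkl <|
    (card_image_eq_of_mem_leagueMaps (hL k) hfk).symm.trans
      (card_image_eq_of_mem_leagueMaps (hL l) hfl)

theorem card_image_comp_lt_of_mem_biUnion_leagueMaps (hL : ∀ k, IsLeague n k ↑(P k) ↑(T k))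
    {s : Finset ℕ} {f g : Fin n → Fin n} (hf : f ∈ s.biUnion fun k => leagueMaps (P k) (T k))
    (hg : g ∈ s.biUnion fun k => leagueMaps (P k) (T k))
    (hfg : #(univ.image f) = #(univ.image g)) : #(univ.image (f ∘ g)) < #(univ.image f) := by
  obtain ⟨k, -, hf⟩ := mem_biUnion.1 hf
  obtain ⟨l, -, hg⟩ := mem_biUnion.1 hg
  rw [card_image_eq_of_mem_leagueMaps (hL k) hf, card_image_eq_of_mem_leagueMaps (hL l) hg] at hfg
  subst hfg
  rw [card_image_eq_of_mem_leagueMaps (hL k) hf]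
  exact card_image_comp_lt_of_mem_leagueMaps (hL k) hf hg

end LeagueFamily

theorem semigroupLength_ge_sum_leagueF_general (n : ℕ) :
    (∑ k ∈ Finset.Icc 1 n, leagueF n k * k.factorial) - 1 ≤
      semigroupLength (Function.End (Fin n)) := by
  choose P T hL hF using exists_finset_isLeague_leagueF_eq n
  let X : Finset (Fin n → Fin n) := (Icc 1 n).biUnion fun k => leagueMaps (P k) (T k)
  have : Finite (Function.End (Fin n)) := inferInstanceAs (Finite (Fin n → Fin n))
  calc (∑ k ∈ Icc 1 n, leagueF n k * k !) - 1 ≤ #X - 1 := by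
        rw [card_biUnion (pairwiseDisjoint_leagueMaps hL _)]
        gcongr with k
        rw [hF]
        exact card_mul_card_mul_factorial_le_card_leagueMaps (hL k).1 (hL k).2.1
    _ ≤ _ := card_sub_one_le_semigroupLength (M := Function.End (Fin n))
        (ρ := fun f : Fin n → Fin n => #(univ.image f)) (fun f g => card_image_comp_le_min f g) X
        fun _ hf _ hg => card_image_comp_lt_of_mem_biUnion_leagueMaps hL hf hg

/-- For every positive integer `n`, the length of the full transformation semigroup
`T_n` satisfies `l(T_n) ≥ (∑_{k=1}^n F(n,k)·k!) − 1`. -/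
theorem semigroupLength_ge_sum_leagueF (n : ℕ) (hn : 0 < n) :
    (∑ k ∈ Finset.Icc 1 n, leagueF n k * k.factorial) - 1 ≤
      semigroupLength (Function.End (Fin n)) :=
  semigroupLength_ge_sum_leagueF_general n
end

section
/- For all integers n and k with 1 ≤ k ≤ n, F(n,k) ≥ C(n−1, k) · S(n−1, k−1), where C denotes the binomial coefficient and S(·,·) the Stirling numbers of the second kind. -/
/-- The Stirling numbers of the second kind: `stirling2 m j` is the number of partitions
of an `m`-element set into `j` non-empty parts. -/
def stirling2 : ℕ → ℕ → ℕ
  | 0, 0 => 1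
  | 0, _ + 1 => 0
  | _ + 1, 0 => 0
  | m + 1, j + 1 => (j + 1) * stirling2 m (j + 1) + stirling2 m j

/-!
Fix a point `a`. A partition having `{a}` as a part meets every `k`-set avoiding `a` in an empty
part, so the partitions into `k` parts with `{a}` as a part and the `k`-subsets of the complement
of `a` form a league. There are `C(n-1, k)` such sets, and adjoining `{a}` to the partitions of
the complement into `k-1` parts gives `S(n-1, k-1)` such partitions: the number of partitions of a
set into `k` parts satisfies the Stirling recurrence, since a new point is inserted either into one
of the existing parts or as a new singleton part.
-/

open Finset

namespace Finpartition

section Lattice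

variable {α : Type*} [Lattice α] [OrderBot α] [IsModularLattice α] [DecidableEq α] {a b c : α}

theorem extend_injective (hb : b ≠ ⊥) (hab : Disjoint a b) (hc : a ⊔ b = c) :
    Function.Injective fun P : Finpartition a => P.extend hb hab hc := by
  intro P Q h
  have hbP : ∀ R : Finpartition a, b ∉ R.parts := fun R hR =>
    hb (hab.symm.eq_bot_of_le (R.le hR))
  have hparts : insert b P.parts = insert b Q.parts := congrArg parts h
  ext1
  rw [← erase_insert (hbP P), hparts, erase_insert (hbP Q)]

end Lattice

variable {α : Type*} [DecidableEq α] {s t : Finset α} {a : α}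

theorem avoid_parts_of_mem (P : Finpartition s) (ht : t ∈ P.parts) :
    (P.avoid t).parts = P.parts.erase t := by
  ext c
  rw [mem_avoid, mem_erase]
  constructor
  · rintro ⟨d, hd, hdt, rfl⟩
    have hne : d ≠ t := by rintro rfl; exact hdt le_rfl
    have hdisj : Disjoint d t := P.disjoint hd ht hne
    rw [sdiff_eq_left.2 hdisj]
    exact ⟨hne, hd⟩
  · rintro ⟨hct, hc⟩
    have hdisj : Disjoint c t := P.disjoint hc ht hct
    exact ⟨c, hc, fun hle => P.ne_bot hc (hdisj.eq_bot_of_le hle), sdiff_eq_left.2 hdisj⟩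

def insertIntoPart (P : Finpartition s) (ht : t ∈ P.parts) (ha : a ∉ s) :
    Finpartition (insert a s) :=
  (P.avoid t).extend (b := insert a t) (insert_ne_empty a t)
    (disjoint_insert_right.2 ⟨fun h => ha (mem_sdiff.1 h).1, sdiff_disjoint⟩)
    (by rw [sup_eq_union, union_insert, sdiff_union_of_subset (P.le ht)])

theorem insertIntoPart_parts (P : Finpartition s) (ht : t ∈ P.parts) (ha : a ∉ s) :
    (P.insertIntoPart ht ha).parts = insert (insert a t) (P.parts.erase t) := by
  rw [insertIntoPart, extend_parts, avoid_parts_of_mem P ht]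

theorem card_insertIntoPart (P : Finpartition s) (ht : t ∈ P.parts) (ha : a ∉ s) :
    #(P.insertIntoPart ht ha).parts = #P.parts := by
  rw [insertIntoPart, card_extend, avoid_parts_of_mem P ht, card_erase_add_one ht]

theorem insertIntoPart_injective (ha : a ∉ s) :
    Function.Injective fun x : Σ P : Finpartition s, {t // t ∈ P.parts} =>
      x.1.insertIntoPart x.2.2 ha := by
  rintro ⟨P, t, ht⟩ ⟨Q, u, hu⟩ h
  have hparts := congrArg parts h
  simp only [insertIntoPart_parts] at hparts
  have hat : a ∉ t := fun h => ha (P.le ht h)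
  have hau : a ∉ u := fun h => ha (Q.le hu h)
  have htu : t = u := by
    have hmem : insert a t ∈ (Q.insertIntoPart hu ha).parts := by
      rw [insertIntoPart_parts, ← hparts]; exact mem_insert_self _ _
    have := (Q.insertIntoPart hu ha).eq_of_mem_parts hmem
      (by rw [insertIntoPart_parts]; exact mem_insert_self _ _) (mem_insert_self a t)
      (mem_insert_self a u)
    rw [← erase_insert hat, this, erase_insert hau]
  subst htu
  have hnotin : ∀ R : Finpartition s, insert a t ∉ R.parts.erase t := fun R hR =>
    ha (R.le (mem_of_mem_erase hR) (mem_insert_self a t))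
  have hPQ : P = Q := by
    ext1
    rw [← insert_erase ht, ← insert_erase hu, ← erase_insert (hnotin P), hparts,
      erase_insert (hnotin Q)]
  subst hPQ
  rfl

theorem insertIntoPart_ne_extend_singleton (P : Finpartition s) (ht : t ∈ P.parts) (ha : a ∉ s)
    (Q : Finpartition s) (hc : s ⊔ {a} = insert a s) :
    P.insertIntoPart ht ha ≠
      Q.extend (singleton_ne_empty a) (disjoint_singleton_right.2 ha) hc := by
  intro h
  set R := P.insertIntoPart ht ha
  have hat : insert a t ∈ R.parts := by rw [insertIntoPart_parts]; exact mem_insert_self _ _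
  have ha' : {a} ∈ R.parts := by rw [h, extend_parts]; exact mem_insert_self _ _
  have hta : insert a t = {a} :=
    R.eq_of_mem_parts hat ha' (mem_insert_self a t) (mem_singleton_self a)
  obtain ⟨x, hx⟩ := P.nonempty_of_mem_parts ht
  have hxa : x = a := mem_singleton.1 (hta ▸ mem_insert_of_mem hx)
  exact ha (hxa ▸ P.le ht hx)

def withNumParts (s : Finset α) (k : ℕ) : Finset (Finpartition s) := {P | #P.parts = k}

theorem succ_mul_card_withNumParts_add_le (ha : a ∉ s) (k : ℕ) :
    (k + 1) * #(withNumParts s (k + 1)) + #(withNumParts s k) ≤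
      #(withNumParts (insert a s) (k + 1)) := by
  have hc : s ⊔ {a} = insert a s := by rw [sup_eq_union, union_comm, insert_eq]
  set A := (withNumParts s (k + 1)).sigma fun P => P.parts.attach
  set addToPart := fun x : Σ P : Finpartition s, {t // t ∈ P.parts} =>
    x.1.insertIntoPart x.2.2 ha
  set addSingleton := fun P : Finpartition s =>
    P.extend (singleton_ne_empty a) (disjoint_singleton_right.2 ha) hc
  have hA : #A = (k + 1) * #(withNumParts s (k + 1)) := by
    rw [card_sigma, sum_congr rfl fun P hP => by rw [card_attach, (mem_filter.1 hP).2],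
      sum_const, smul_eq_mul, mul_comm]
  have hdisj : Disjoint (A.image addToPart) ((withNumParts s k).image addSingleton) := by
    simp only [disjoint_left, mem_image, not_exists, not_and]
    rintro _ ⟨⟨P, t, ht⟩, -, rfl⟩ Q - h
    exact insertIntoPart_ne_extend_singleton P ht ha Q hc h.symm
  have hsub : A.image addToPart ∪ (withNumParts s k).image addSingleton ⊆
      withNumParts (insert a s) (k + 1) := by
    simp only [union_subset_iff, image_subset_iff, withNumParts, mem_filter, mem_univ, true_and]
    refine ⟨fun x hx => ?_, fun P hP => ?_⟩
    · rw [card_insertIntoPart]; exact (mem_filter.1 (mem_sigma.1 hx).1).2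
    · rw [card_extend, hP]
  calc (k + 1) * #(withNumParts s (k + 1)) + #(withNumParts s k)
      = #(A.image addToPart ∪ (withNumParts s k).image addSingleton) := by
        rw [card_union_of_disjoint hdisj, card_image_of_injective _ (insertIntoPart_injective ha),
          card_image_of_injective _ (extend_injective _ _ hc), hA]
    _ ≤ _ := card_le_card hsub

theorem stirlingSecond_le_card_withNumParts (s : Finset α) (k : ℕ) :
    Nat.stirlingSecond #s k ≤ #(withNumParts s k) := by
  induction s using Finset.induction_on generalizing k with
  | empty =>
    cases k with
    | zero =>
      exact card_pos.2 ⟨⊥, mem_filter.2 ⟨mem_univ _, card_bot _⟩⟩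
    | succ k => simp
  | insert a s ha ih =>
    cases k with
    | zero => simp [card_insert_of_notMem ha]
    | succ k =>
      rw [card_insert_of_notMem ha, Nat.stirlingSecond_succ_succ]
      calc _ ≤ (k + 1) * #(withNumParts s (k + 1)) + #(withNumParts s k) := by
            gcongr <;> apply ih
        _ ≤ _ := succ_mul_card_withNumParts_add_le ha k

theorem stirlingSecond_le_card_filter_singleton_mem [Fintype α] (a : α) (k : ℕ) :
    Nat.stirlingSecond (Fintype.card α - 1) k ≤
      #{Q : Finpartition (univ : Finset α) | #Q.parts = k + 1 ∧ {a} ∈ Q.parts} := by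
  have ha : a ∉ univ.erase a := notMem_erase a univ
  have hc : univ.erase a ⊔ {a} = univ := by
    rw [sup_eq_union, union_comm, ← insert_eq, insert_erase (mem_univ a)]
  calc Nat.stirlingSecond (Fintype.card α - 1) k
      ≤ #(withNumParts (univ.erase a) k) := by
        simpa [card_erase_of_mem] using stirlingSecond_le_card_withNumParts (univ.erase a) k
    _ = #((withNumParts (univ.erase a) k).image
          fun P => P.extend (singleton_ne_empty a) (disjoint_singleton_right.2 ha) hc) :=
        (card_image_of_injective _ (extend_injective _ _ hc)).symm
    _ ≤ _ := by
        refine card_le_card fun Q hQ => ?_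
        obtain ⟨P, hP, rfl⟩ := mem_image.1 hQ
        simp only [withNumParts, mem_filter, mem_univ, true_and] at hP ⊢
        exact ⟨by rw [card_extend, hP], by rw [extend_parts]; exact mem_insert_self _ _⟩

end Finpartition

theorem stirling2_eq_stirlingSecond : stirling2 = Nat.stirlingSecond := by
  funext m j
  induction m generalizing j with
  | zero => cases j <;> rfl
  | succ m ih => cases j <;> simp [stirling2, Nat.stirlingSecond_succ_succ, ih]

theorem ncard_mul_ncard_le_leagueF {n k : ℕ} {P : Set (Finpartition (univ : Finset (Fin n)))}
    {T : Set (Finset (Fin n))} (h : IsLeague n k P T) : P.ncard * T.ncard ≤ leagueF n k := by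
  refine le_csSup ⟨Nat.card (Finpartition (univ : Finset (Fin n))) * Nat.card (Finset (Fin n)), ?_⟩
    ⟨P, T, h, rfl⟩
  rintro _ ⟨P, T, -, rfl⟩
  exact Nat.mul_le_mul (Set.ncard_le_card P) (Set.ncard_le_card T)

theorem isLeague_of_singleton_mem {n k : ℕ} (a : Fin n)
    {P : Set (Finpartition (univ : Finset (Fin n)))} {T : Set (Finset (Fin n))}
    (hP : ∀ Q ∈ P, #Q.parts = k ∧ {a} ∈ Q.parts) (hT : ∀ A ∈ T, #A = k ∧ a ∉ A) :
    IsLeague n k P T := by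
  refine ⟨fun Q hQ => (hP Q hQ).1, fun A hA => (hT A hA).1, fun Q hQ A hA hAQ => ?_⟩
  have := hAQ {a} (hP Q hQ).2
  rw [inter_singleton_of_notMem (hT A hA).2, card_empty] at this
  exact zero_ne_one this

theorem leagueF_ge_general (n k : ℕ) (hk : 1 ≤ k) :
    (n - 1).choose k * stirling2 (n - 1) (k - 1) ≤ leagueF n k := by
  obtain _ | m := n
  · simp [Nat.choose_eq_zero_of_lt hk]
  obtain ⟨j, rfl⟩ := Nat.exists_eq_add_of_le' hk
  rw [stirling2_eq_stirlingSecond, Nat.add_sub_cancel, Nat.add_sub_cancel]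
  set a := Fin.last m
  set P : Finset (Finpartition (univ : Finset (Fin (m + 1)))) :=
    {Q | #Q.parts = j + 1 ∧ {a} ∈ Q.parts}
  set T := powersetCard (j + 1) (univ.erase a)
  have hleague : IsLeague (m + 1) (j + 1) P T := by
    refine isLeague_of_singleton_mem a (fun Q hQ => (mem_filter.1 (mem_coe.1 hQ)).2)
      fun A hA => ?_
    obtain ⟨hAs, hAcard⟩ := mem_powersetCard.1 (mem_coe.1 hA)
    exact ⟨hAcard, fun h => notMem_erase a univ (hAs h)⟩
  calc m.choose (j + 1) * Nat.stirlingSecond m j ≤ #T * #P := by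
        gcongr
        · simp [T]
        · simpa using Finpartition.stirlingSecond_le_card_filter_singleton_mem a j
    _ = (P : Set _).ncard * (T : Set _).ncard := by
        rw [Set.ncard_coe_finset, Set.ncard_coe_finset, mul_comm]
    _ ≤ leagueF (m + 1) (j + 1) := ncard_mul_ncard_le_leagueF hleague

/-- For all `1 ≤ k ≤ n`, `F(n,k) ≥ C(n−1, k) · S(n−1, k−1)`, where `C` is the binomial
coefficient and `S` the Stirling number of the second kind. -/
theorem leagueF_ge (n k : ℕ) (hk : 1 ≤ k) (hkn : k ≤ n) :
    (n - 1).choose k * stirling2 (n - 1) (k - 1) ≤ leagueF n k :=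
  leagueF_ge_general n k hk
end

section
/- For every integer n > 3, F(n,2) = 3(2^{n−3} − 1), where F(n,k) is the largest content of a league of rank k on {1,...,n}. -/
open Finset

namespace Nat

lemma choose_two_mul_two (m : ℕ) : m.choose 2 * 2 = m * (m - 1) := by
  rw [choose_two_right, div_two_mul_two_of_even (even_mul_pred_self m)]

lemma sum_choose_two_le {ι : Type*} (s : Finset ι) (f : ι → ℕ) :
    ∑ i ∈ s, (f i).choose 2 ≤ (∑ i ∈ s, (f i - 1) + 1).choose 2 := by
  set M := ∑ i ∈ s, (f i - 1)
  have hle : ∀ i ∈ s, f i ≤ M + 1 := fun i hi => by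
    have := single_le_sum (f := fun i => f i - 1) (fun _ _ => Nat.zero_le _) hi
    omega
  refine Nat.le_of_mul_le_mul_right ?_ two_pos
  calc (∑ i ∈ s, (f i).choose 2) * 2 = ∑ i ∈ s, (f i - 1) * f i := by
        rw [sum_mul]; exact sum_congr rfl fun i _ => by rw [choose_two_mul_two, Nat.mul_comm]
    _ ≤ ∑ i ∈ s, (f i - 1) * (M + 1) := sum_le_sum fun i hi => Nat.mul_le_mul_left _ (hle i hi)
    _ = (M + 1).choose 2 * 2 := by
        rw [← sum_mul, choose_two_mul_two, Nat.add_sub_cancel, Nat.mul_comm]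

lemma choose_two_le_three_mul_two_pow {j : ℕ} (hj : 3 ≤ j) : j.choose 2 ≤ 3 * 2 ^ (j - 3) := by
  induction j, hj using Nat.le_induction with
  | base => decide
  | succ j hj ih =>
    have hj_le : j ≤ j.choose 2 := by
      have := Nat.mul_le_mul_left j (show 2 ≤ j - 1 by omega)
      have := choose_two_mul_two j
      omega
    have hstep : (j + 1).choose 2 = j.choose 2 + j := by simp [choose_succ_succ', add_comm]
    rw [hstep, show j + 1 - 3 = j - 3 + 1 by omega, pow_succ]
    omega

lemma two_pow_sub_one_mul_choose_two_le {i j : ℕ} (h : 4 ≤ i + j) :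
    (2 ^ i - 1) * j.choose 2 ≤ 3 * (2 ^ (i + j - 3) - 1) := by
  obtain hj | hj := Nat.lt_or_ge j 3
  · interval_cases j
    · simp
    · simp
    · obtain ⟨k, rfl⟩ : ∃ k, i = k + 2 := ⟨i - 2, by omega⟩
      rw [show k + 2 + 2 - 3 = k + 1 by omega, pow_add, pow_succ]
      simp only [choose_self, mul_one]
      have := Nat.two_pow_pos k
      omega
  obtain ⟨k, rfl⟩ : ∃ k, j = k + 3 := ⟨j - 3, by omega⟩
  calc (2 ^ i - 1) * (k + 3).choose 2 ≤ (2 ^ i - 1) * (3 * 2 ^ k) :=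
        Nat.mul_le_mul_left _ (choose_two_le_three_mul_two_pow (by omega))
    _ = 3 * (2 ^ (i + (k + 3) - 3) - 2 ^ k) := by
        rw [show i + (k + 3) - 3 = i + k by omega, pow_add, Nat.mul_sub, Nat.sub_mul, one_mul]
        congr 1; ring
    _ ≤ 3 * (2 ^ (i + (k + 3) - 3) - 1) := by
        have := Nat.two_pow_pos k
        omega

end Nat

namespace Finpartition

variable {α : Type*} [DecidableEq α] [Fintype α] {Q R : Finpartition (univ : Finset α)}

lemma parts_eq_pair_compl (hR : #R.parts = 2) {p : Finset α} (hp : p ∈ R.parts) :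
    R.parts = {p, pᶜ} := by
  obtain ⟨q, hq, hqp⟩ := exists_mem_ne (by omega : 1 < #R.parts) p
  have hparts : R.parts = {p, q} :=
    (eq_of_subset_of_card_le (by simp [insert_subset_iff, hp, hq])
      (by rw [hR, card_pair hqp.symm])).symm
  have hcompl : IsCompl p q := by
    refine ⟨R.disjoint hp hq hqp.symm, codisjoint_iff.2 ?_⟩
    simpa [hparts] using R.sup_parts
  rw [hparts, hcompl.symm.eq_compl]

lemma part_subset_part_of_le (h : Q ≤ R) (a : α) : Q.part a ⊆ R.part a := by
  obtain ⟨r, hr, hqr⟩ := h (Q.part_mem.2 (mem_univ a))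
  rwa [R.part_eq_of_mem hr (hqr (Q.mem_part (mem_univ a)))]

lemma mem_part_iff_part_subset_of_le (h : Q ≤ R) {a b : α} :
    b ∈ R.part a ↔ Q.part b ⊆ R.part a := by
  refine ⟨fun hb => ?_, fun hb => hb (Q.mem_part (mem_univ b))⟩
  rw [← R.part_eq_of_mem (R.part_mem.2 (mem_univ a)) hb]
  exact part_subset_part_of_le h b

lemma ofSetoid_eqvGen_le {r : α → α → Prop} [DecidableRel (Relation.EqvGen.setoid r).r]
    (h : ∀ a b, r a b → R.part a = R.part b) : ofSetoid (Relation.EqvGen.setoid r) ≤ R := by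
  intro p hp
  obtain ⟨a, -, rfl⟩ := (ofSetoid _).part_surjOn hp
  refine ⟨R.part a, R.part_mem.2 (mem_univ a), fun b hb => ?_⟩
  have hab : Relation.EqvGen r a b := mem_part_ofSetoid_iff_rel.1 hb
  rw [Setoid.eqvGen_le (s := Setoid.ker R.part) h hab]
  exact R.mem_part (mem_univ b)

lemma ncard_coarsenings_card_parts_eq_two_le [Nonempty α] (Q : Finpartition (univ : Finset α)) :
    {R | Q ≤ R ∧ #R.parts = 2}.ncard ≤ 2 ^ (#Q.parts - 1) - 1 := by
  obtain ⟨z⟩ := ‹Nonempty α›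
  -- `R` is determined by the nonempty set of parts of `Q` outside the part of `R` containing `z`.
  let outside (R : Finpartition (univ : Finset α)) : Finset (Finset α) :=
    {p ∈ Q.parts | ¬ p ⊆ R.part z}
  have hout : ∀ R, Q ≤ R → ∀ v, v ∉ R.part z ↔ Q.part v ∈ outside R := fun R hR v => by
    simp [outside, mem_part_iff_part_subset_of_le hR]
  have hmaps : ∀ R ∈ {R | Q ≤ R ∧ #R.parts = 2},
      outside R ∈ ((Q.parts.erase (Q.part z)).powerset.erase ∅ : Set (Finset (Finset α))) := by
    rintro R ⟨hQR, hR⟩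
    simp only [coe_erase, Set.mem_sdiff, mem_coe, mem_powerset, Set.mem_singleton_iff]
    refine ⟨fun p hp => ?_, ?_⟩
    · obtain ⟨hpQ, hpz⟩ := mem_filter.1 hp
      refine mem_erase.2 ⟨?_, hpQ⟩
      rintro rfl
      exact hpz (part_subset_part_of_le hQR z)
    · have hcompl : (R.part z)ᶜ ∈ R.parts := by
        rw [parts_eq_pair_compl hR (R.part_mem.2 (mem_univ z))]
        exact mem_insert_of_mem (mem_singleton_self _)
      obtain ⟨v, hv⟩ := R.nonempty_of_mem_parts hcompl
      exact ne_empty_of_mem ((hout R hQR v).1 (mem_compl.1 hv))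
  have hinj : Set.InjOn outside {R | Q ≤ R ∧ #R.parts = 2} := by
    rintro R ⟨hQR, hR⟩ R' ⟨hQR', hR'⟩ h
    have hz : R.part z = R'.part z := by
      ext v
      rw [← not_iff_not, hout R hQR, hout R' hQR', h]
    exact Finpartition.ext (by rw [parts_eq_pair_compl hR (R.part_mem.2 (mem_univ z)),
      parts_eq_pair_compl hR' (R'.part_mem.2 (mem_univ z)), hz])
  refine (Set.ncard_le_ncard_of_injOn outside hmaps hinj).trans_eq ?_
  rw [Set.ncard_coe_finset, card_erase_of_mem (empty_mem_powerset _), card_powerset,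
    card_erase_of_mem (Q.part_mem.2 (mem_univ z))]

lemma ncard_pairs_within_parts_le (Q : Finpartition (univ : Finset α)) :
    {A : Finset α | #A = 2 ∧ ∃ p ∈ Q.parts, A ⊆ p}.ncard
      ≤ (Fintype.card α - #Q.parts + 1).choose 2 := by
  have hset : {A : Finset α | #A = 2 ∧ ∃ p ∈ Q.parts, A ⊆ p} =
      ↑(Q.parts.biUnion (powersetCard 2)) := by
    ext A
    simp only [Set.mem_ofPred_eq, coe_biUnion, mem_coe, Set.mem_iUnion, mem_powersetCard,
      exists_prop]
    tauto
  have hdisj : (Q.parts : Set (Finset α)).PairwiseDisjoint (powersetCard 2) := by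
    intro p hp q hq hpq
    refine disjoint_left.2 fun A hAp hAq => ?_
    obtain ⟨a, ha⟩ := card_pos.1 (by rw [(mem_powersetCard.1 hAp).2]; norm_num)
    exact disjoint_left.1 (Q.disjoint hp hq hpq) ((mem_powersetCard.1 hAp).1 ha)
      ((mem_powersetCard.1 hAq).1 ha)
  have hsum : ∑ p ∈ Q.parts, (#p - 1) = Fintype.card α - #Q.parts := by
    rw [sum_tsub_distrib _ fun p hp => card_pos.2 (Q.nonempty_of_mem_parts hp), Q.sum_card_parts,
      card_univ, sum_const, smul_eq_mul, mul_one]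
  rw [hset, Set.ncard_coe_finset, card_biUnion hdisj, ← hsum]
  simpa only [card_powersetCard] using Nat.sum_choose_two_le Q.parts card

def ofCompl (S : Finset α) (hS : S.Nonempty) (hSc : Sᶜ.Nonempty) : Finpartition (univ : Finset α) :=
  (indiscrete hSc.ne_empty).extend hS.ne_empty disjoint_compl_left (by simp)

@[simp]
lemma ofCompl_parts {S : Finset α} (hS : S.Nonempty) (hSc : Sᶜ.Nonempty) :
    (ofCompl S hS hSc).parts = {S, Sᶜ} := rfl

lemma card_ofCompl_parts {S : Finset α} (hS : S.Nonempty) (hSc : Sᶜ.Nonempty) :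
    #(ofCompl S hS hSc).parts = 2 := by
  rw [ofCompl_parts]
  obtain ⟨a, ha⟩ := hS
  exact card_pair fun h => mem_compl.1 (h ▸ ha) ha

end Finpartition

section League

variable {n : ℕ}

lemma not_isTransversal_of_subset {A p : Finset (Fin n)}
    {Q : Finpartition (univ : Finset (Fin n))} (hA : #A ≠ 1) (hp : p ∈ Q.parts) (hAp : A ⊆ p) :
    ¬ IsTransversal A Q := fun h => hA (by rw [← inter_eq_left.2 hAp]; exact h p hp)

lemma exists_subset_of_not_isTransversal {A : Finset (Fin n)}
    {R : Finpartition (univ : Finset (Fin n))} (hA : #A = 2) (hR : #R.parts = 2)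
    (h : ¬ IsTransversal A R) : ∃ p ∈ R.parts, A ⊆ p := by
  simp only [IsTransversal, not_forall] at h
  obtain ⟨p, hp, hAp⟩ := h
  have hparts := Finpartition.parts_eq_pair_compl hR hp
  have hle : #(A ∩ p) ≤ 2 := hA ▸ card_le_card inter_subset_left
  obtain h0 | h2 : #(A ∩ p) = 0 ∨ #(A ∩ p) = 2 := by omega
  · refine ⟨pᶜ, by simp [hparts], ?_⟩
    rw [subset_compl_iff_disjoint_right, disjoint_iff_inter_eq_empty]
    exact card_eq_zero.1 h0
  · exact ⟨p, hp, inter_eq_left.1 (eq_of_subset_of_card_le inter_subset_left (by omega))⟩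

lemma IsLeague.content_le {P : Set (Finpartition (univ : Finset (Fin n)))}
    {T : Set (Finset (Fin n))} (hn : 3 < n) (h : IsLeague n 2 P T) :
    P.ncard * T.ncard ≤ 3 * (2 ^ (n - 3) - 1) := by
  classical
  obtain ⟨hP, hT, hPT⟩ := h
  have : Nonempty (Fin n) := ⟨⟨0, by omega⟩⟩
  -- the partition of `Fin n` into the connected components of the graph `T`
  let Q := Finpartition.ofSetoid (Relation.EqvGen.setoid fun a b : Fin n => {a, b} ∈ T)
  have hPQ : P ⊆ {R | Q ≤ R ∧ #R.parts = 2} := by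
    refine fun R hR => ⟨Finpartition.ofSetoid_eqvGen_le fun a b hab => ?_, hP R hR⟩
    obtain ⟨p, hp, hab⟩ :=
      exists_subset_of_not_isTransversal (hT _ hab) (hP R hR) (hPT R hR _ hab)
    rw [R.part_eq_of_mem hp (hab (mem_insert_self a _)),
      R.part_eq_of_mem hp (hab (mem_insert_of_mem (mem_singleton_self b)))]
  have hTQ : T ⊆ {A | #A = 2 ∧ ∃ p ∈ Q.parts, A ⊆ p} := by
    refine fun A hA => ⟨hT A hA, ?_⟩
    obtain ⟨a, b, -, rfl⟩ := card_eq_two.1 (hT A hA)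
    refine ⟨Q.part a, Q.part_mem.2 (mem_univ a), insert_subset ?_ (singleton_subset_iff.2 ?_)⟩
    · exact Q.mem_part (mem_univ a)
    · exact Finpartition.mem_part_ofSetoid_iff_rel.2 (Relation.EqvGen.rel _ _ hA)
  have hc : 0 < #Q.parts := card_pos.2 (Q.parts_nonempty (univ_nonempty.ne_empty))
  have hcn : #Q.parts ≤ n := by simpa using Q.card_parts_le_card
  calc P.ncard * T.ncard
      ≤ (2 ^ (#Q.parts - 1) - 1) * (n - #Q.parts + 1).choose 2 := by
        refine Nat.mul_le_mul ((Set.ncard_le_ncard hPQ).trans ?_)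
          ((Set.ncard_le_ncard hTQ).trans ?_)
        · exact Q.ncard_coarsenings_card_parts_eq_two_le
        · simpa using Q.ncard_pairs_within_parts_le
    _ ≤ 3 * (2 ^ (n - 3) - 1) := by
        have := Nat.two_pow_sub_one_mul_choose_two_le (i := #Q.parts - 1)
          (j := n - #Q.parts + 1) (by omega)
        rwa [show #Q.parts - 1 + (n - #Q.parts + 1) - 3 = n - 3 by omega] at this

lemma exists_isLeague_content_eq (hn : 3 ≤ n) :
    ∃ P T, IsLeague n 2 P T ∧ P.ncard * T.ncard = 3 * (2 ^ (n - 3) - 1) := by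
  obtain ⟨K, -, hK⟩ := exists_subset_card_eq (s := (univ : Finset (Fin n))) (by simpa using hn)
  obtain ⟨x, hx⟩ : K.Nonempty := card_pos.1 (by omega)
  let 𝒮 := Kᶜ.powerset.erase ∅
  have hS : ∀ S ∈ 𝒮, S.Nonempty := fun S hS =>
    nonempty_iff_ne_empty.2 (mem_erase.1 hS).1
  have hKS : ∀ S ∈ 𝒮, K ⊆ Sᶜ := fun S hS =>
    subset_compl_comm.1 (mem_powerset.1 (mem_erase.1 hS).2)
  let R (S : 𝒮) : Finpartition (univ : Finset (Fin n)) :=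
    Finpartition.ofCompl S.1 (hS S.1 S.2) ⟨x, hKS S.1 S.2 hx⟩
  have hR_parts (S : 𝒮) : (R S).parts = {S.1, S.1ᶜ} := Finpartition.ofCompl_parts _ _
  have hR_inj : Function.Injective R := by
    intro S S' h
    have hS_mem : S.1 ∈ (R S').parts := by
      rw [← h, hR_parts]
      exact mem_insert_self _ _
    rw [hR_parts] at hS_mem
    obtain hSS' | hSS' := mem_insert.1 hS_mem
    · exact Subtype.ext hSS'
    · have hxS : x ∈ S.1 := by
        rw [mem_singleton.1 hSS']
        exact hKS S'.1 S'.2 hx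
      exact absurd hxS (mem_compl.1 (hKS S.1 S.2 hx))
  refine ⟨Set.range R, ↑(K.powersetCard 2), ⟨?_, ?_, ?_⟩, ?_⟩
  · rintro _ ⟨S, rfl⟩
    exact Finpartition.card_ofCompl_parts _ _
  · intro A hA
    exact (mem_powersetCard.1 hA).2
  · rintro _ ⟨S, rfl⟩ A hA
    exact not_isTransversal_of_subset (by rw [(mem_powersetCard.1 hA).2]; norm_num)
      (by simp [hR_parts]) ((mem_powersetCard.1 hA).1.trans (hKS S.1 S.2))
  · rw [Set.ncard_range_of_injective hR_inj, Nat.card_eq_fintype_card, Fintype.card_coe,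
      Set.ncard_coe_finset, card_powersetCard, hK, card_erase_of_mem (empty_mem_powerset _),
      card_powerset, card_compl, hK, Fintype.card_fin, mul_comm]
    rfl

end League

/-- For every integer `n > 3`, `F(n,2) = 3(2^(n−3) − 1)`. -/
theorem leagueF_two (n : ℕ) (hn : 3 < n) :
    leagueF n 2 = 3 * (2 ^ (n - 3) - 1) := by
  refine IsGreatest.csSup_eq ⟨?_, ?_⟩
  · obtain ⟨P, T, hPT, h⟩ := exists_isLeague_content_eq hn.le
    exact ⟨P, T, hPT, h.symm⟩
  · rintro _ ⟨P, T, hPT, rfl⟩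
    exact hPT.content_le hn
end

section
/- For every integer n ≥ 2, F*(n, n−1) = ⌊(n−1)/2⌋ · ⌈(n−1)/2⌉, where F*(n,k) is the largest content of a league of rank k on {1,...,n} in which every partition consists of intervals. -/
/-- A finset of `Fin n` is an interval of consecutive integers if it contains every
element lying between two of its members. -/
def IsIntervalFinset {n : ℕ} (p : Finset (Fin n)) : Prop :=
  ∀ a b c : Fin n, a ∈ p → c ∈ p → a ≤ b → b ≤ c → b ∈ p

/-- `F*(n,k)`: the largest content `|P|·|T|` of a league `(P, T)` of rank `k` on
`{1,…,n}` in which every partition in `P` has all of its parts equal to intervals of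
consecutive integers. -/
noncomputable def leagueFStar (n k : ℕ) : ℕ :=
  sSup {m : ℕ | ∃ P T, IsLeague n k P T ∧
    (∀ Q ∈ P, ∀ p ∈ Q.parts, IsIntervalFinset p) ∧ m = P.ncard * T.ncard}
/-!
A partition of `{0,…,m}` into `m` parts has one part of size two and singletons otherwise; if
its parts are intervals, that part is an adjacent pair `{i, i+1}`, so these partitions are
indexed by `i < m`. An `m`-subset is the complement `{j}ᶜ` of a point, and it is a transversal of
the partition indexed by `i` iff `j ∈ {i, i+1}`. A league thus amounts to index sets `I`, `J` with
`J` disjoint from `I ∪ (I + 1)`, a set of at least `|I| + 1` points, whence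
`|I|·|J| ≤ |I|·(m − |I|) ≤ ⌊m/2⌋⌈m/2⌉`; the choice `I = [0, ⌊m/2⌋)`, `J = (⌊m/2⌋, m]` attains it.
-/

open Finset

namespace Finpartition

variable {α : Type*} [DecidableEq α] {s D : Finset α}

def ofPart (hD : D ⊆ s) (hne : D.Nonempty) : Finpartition s :=
  (⊥ : Finpartition (s \ D)).extend hne.ne_empty disjoint_sdiff_self_left
    (sdiff_union_of_subset hD)

lemma mem_ofPart_parts {hD : D ⊆ s} {hne : D.Nonempty} {p : Finset α} :
    p ∈ (ofPart hD hne).parts ↔ p = D ∨ ∃ x ∈ s \ D, {x} = p := by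
  rw [ofPart, extend_parts, mem_insert, mem_bot_iff]

lemma card_ofPart_parts (hD : D ⊆ s) (hne : D.Nonempty) :
    #(ofPart hD hne).parts = #s - #D + 1 := by
  rw [ofPart, card_extend, card_bot, card_sdiff_of_subset hD]

lemma eq_ofPart (Q : Finpartition s) (hD : D ∈ Q.parts)
    (hsingle : ∀ p ∈ Q.parts, p ≠ D → #p = 1) :
    Q = ofPart (Q.le hD) (Q.nonempty_of_mem_parts hD) := by
  ext p
  rw [mem_ofPart_parts]
  constructor
  · intro hp
    refine or_iff_not_imp_left.2 fun hpD => ?_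
    obtain ⟨x, rfl⟩ := card_eq_one.1 (hsingle p hp hpD)
    have hxD : x ∉ D := disjoint_singleton_left.1 (Q.disjoint hp hD hpD)
    exact ⟨x, mem_sdiff.2 ⟨Q.le hp (mem_singleton_self x), hxD⟩, rfl⟩
  · rintro (rfl | ⟨x, hx, rfl⟩)
    · exact hD
    · obtain ⟨hxs, hxD⟩ := mem_sdiff.1 hx
      have hpart : Q.part x ∈ Q.parts := Q.part_mem.2 hxs
      have hxpart : x ∈ Q.part x := Q.mem_part hxs
      have hne : Q.part x ≠ D := fun h => hxD (h ▸ hxpart)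
      obtain ⟨y, hy⟩ := card_eq_one.1 (hsingle _ hpart hne)
      rw [hy, mem_singleton] at hxpart
      rwa [hxpart, ← hy]

lemma exists_card_eq_two_of_card_parts_add_one (Q : Finpartition s)
    (hcard : #Q.parts + 1 = #s) :
    ∃ D ∈ Q.parts, #D = 2 ∧ ∀ p ∈ Q.parts, p ≠ D → #p = 1 := by
  have hpos : ∀ p ∈ Q.parts, 0 < #p := fun p hp => (Q.nonempty_of_mem_parts hp).card_pos
  have hexcess : ∑ p ∈ Q.parts, (#p - 1) = 1 := by
    have : ∑ p ∈ Q.parts, (#p - 1) + #Q.parts = #s := by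
      rw [← Q.sum_card_parts, card_eq_sum_ones, ← sum_add_distrib]
      exact sum_congr rfl fun p hp => Nat.sub_add_cancel (hpos p hp)
    omega
  obtain ⟨D, hD, hD1⟩ := exists_ne_zero_of_sum_ne_zero (hexcess.trans_ne one_ne_zero)
  rw [← add_sum_erase _ _ hD] at hexcess
  have hrest := sum_eq_zero_iff.1 (show ∑ p ∈ Q.parts.erase D, (#p - 1) = 0 by omega)
  refine ⟨D, hD, by omega, fun p hp hpD => ?_⟩
  have := hrest p (mem_erase.2 ⟨hpD, hp⟩)
  have := hpos p hp
  omega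

end Finpartition

lemma Nat.mul_sub_le_div_two_mul_succ_div_two (a m : ℕ) :
    a * (m - a) ≤ m / 2 * ((m + 1) / 2) := by
  rcases le_total a m with ham | hma
  · obtain ⟨b, rfl⟩ := Nat.exists_eq_add_of_le ham
    rw [Nat.add_sub_cancel_left]
    rcases Nat.even_or_odd' (a + b) with ⟨k, hk | hk⟩
    · rw [hk, show 2 * k / 2 = k by omega, show (2 * k + 1) / 2 = k by omega]
      nlinarith [sq_nonneg ((a : ℤ) - b)]
    · rw [hk, show (2 * k + 1) / 2 = k by omega, show (2 * k + 1 + 1) / 2 = k + 1 by omega]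
      nlinarith [sq_nonneg ((a : ℤ) - b)]
  · simp [Nat.sub_eq_zero_of_le hma]

lemma Fin.card_mul_card_le_of_forall_notMem {m : ℕ} (I : Finset (Fin m))
    (J : Finset (Fin (m + 1))) (hIJ : ∀ i ∈ I, i.castSucc ∉ J ∧ i.succ ∉ J) :
    #I * #J ≤ m / 2 * ((m + 1) / 2) := by
  rcases I.eq_empty_or_nonempty with rfl | hI
  · simp
  set U := insert (I.min' hI).castSucc (I.map (Fin.succEmb m))
  have hmin : (I.min' hI).castSucc ∉ I.map (Fin.succEmb m) := by
    simp only [mem_map, Fin.coe_succEmb, not_exists, not_and]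
    intro i hi hsucc
    have := I.min'_le i hi
    rw [Fin.ext_iff, Fin.val_succ, Fin.val_castSucc] at hsucc
    rw [Fin.le_def] at this
    omega
  have hU : #U = #I + 1 := by rw [card_insert_of_notMem hmin, card_map]
  have hJU : Disjoint J U := by
    rw [disjoint_right]
    simp only [U, mem_insert, mem_map, Fin.coe_succEmb]
    rintro _ (rfl | ⟨i, hi, rfl⟩)
    · exact (hIJ _ (I.min'_mem hI)).1
    · exact (hIJ i hi).2
  have hJ : #J + #U ≤ m + 1 := by
    rw [← card_union_of_disjoint hJU]
    simpa using card_le_univ (J ∪ U)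
  calc #I * #J ≤ #I * (m - #I) := Nat.mul_le_mul_left _ (by omega)
    _ ≤ m / 2 * ((m + 1) / 2) := Nat.mul_sub_le_div_two_mul_succ_div_two _ _

lemma exists_eq_castSucc_pair_of_isIntervalFinset {m : ℕ} {D : Finset (Fin (m + 1))}
    (hD : IsIntervalFinset D) (hcard : #D = 2) : ∃ i : Fin m, D = {i.castSucc, i.succ} := by
  obtain ⟨x, y, hxy, rfl⟩ := card_eq_two.1 hcard
  clear hcard
  wlog hlt : x < y generalizing x y
  · rw [pair_comm] at hD ⊢
    exact this y x hxy.symm hD (lt_of_le_of_ne (not_lt.1 hlt) hxy.symm)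
  have hx : (x : ℕ) < m := by omega
  refine ⟨⟨x, hx⟩, ?_⟩
  suffices hy : (y : ℕ) = x + 1 by
    rw [show (⟨x, hx⟩ : Fin m).castSucc = x from rfl,
      show (⟨x, hx⟩ : Fin m).succ = y from Fin.ext (by simp [hy])]
  by_contra hy
  have hmid := hD x ⟨x + 1, by omega⟩ y (by simp) (by simp) (by simp [Fin.le_def])
    (by rw [Fin.le_def]; simp only; omega)
  simp only [mem_insert, mem_singleton, Fin.ext_iff] at hmid
  omega

section AdjacentPair

variable {m : ℕ}

def adjPartition (i : Fin m) : Finpartition (univ : Finset (Fin (m + 1))) :=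
  Finpartition.ofPart (subset_univ {i.castSucc, i.succ}) (insert_nonempty _ _)

lemma card_castSucc_succ_pair (i : Fin m) : #{i.castSucc, i.succ} = 2 :=
  card_pair Fin.castSucc_lt_succ.ne

lemma card_adjPartition_parts (i : Fin m) : #(adjPartition i).parts = m := by
  rw [adjPartition, Finpartition.card_ofPart_parts, card_castSucc_succ_pair, card_univ,
    Fintype.card_fin]
  have := i.pos
  omega

lemma isIntervalFinset_of_mem_adjPartition {i : Fin m} {p : Finset (Fin (m + 1))}
    (hp : p ∈ (adjPartition i).parts) : IsIntervalFinset p := by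
  rw [adjPartition, Finpartition.mem_ofPart_parts] at hp
  rcases hp with rfl | ⟨x, -, rfl⟩ <;> intro a b c ha hc hab hbc
  · simp only [mem_insert, mem_singleton, Fin.ext_iff, Fin.val_castSucc, Fin.val_succ] at ha hc ⊢
    rw [Fin.le_def] at hab hbc
    omega
  · rw [mem_singleton] at ha hc ⊢
    subst ha hc
    exact le_antisymm hbc hab

lemma isTransversal_compl_singleton_adjPartition_iff (i : Fin m) (j : Fin (m + 1)) :
    IsTransversal {j}ᶜ (adjPartition i) ↔ j = i.castSucc ∨ j = i.succ := by
  have hinter : ∀ p : Finset (Fin (m + 1)), {j}ᶜ ∩ p = p.erase j := fun p => by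
    ext; simp
  simp only [IsTransversal, adjPartition, Finpartition.mem_ofPart_parts, hinter]
  constructor
  · intro h
    have := h _ (Or.inl rfl)
    by_contra hj
    rw [erase_eq_of_notMem (by simpa using hj), card_castSucc_succ_pair] at this
    omega
  · rintro hj p (rfl | ⟨x, hx, rfl⟩)
    · rw [card_erase_of_mem (by simpa using hj), card_castSucc_succ_pair]
    · have hxj : x ≠ j := by rintro rfl; simp_all
      rw [erase_eq_of_notMem (by simpa using hxj.symm), card_singleton]

lemma adjPartition_injective : Function.Injective (adjPartition (m := m)) := by
  intro i i' h
  have hmem : {i.castSucc, i.succ} ∈ (adjPartition i').parts := by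
    rw [← h, adjPartition, Finpartition.mem_ofPart_parts]
    exact Or.inl rfl
  rw [adjPartition, Finpartition.mem_ofPart_parts] at hmem
  rcases hmem with hpair | ⟨x, -, hx⟩
  · have h₁ : i.castSucc ∈ ({i'.castSucc, i'.succ} : Finset _) := hpair ▸ by simp
    have h₂ : i.succ ∈ ({i'.castSucc, i'.succ} : Finset _) := hpair ▸ by simp
    simp only [mem_insert, mem_singleton, Fin.ext_iff, Fin.val_castSucc, Fin.val_succ] at h₁ h₂
    omega
  · have := card_castSucc_succ_pair i
    rw [← hx, card_singleton] at this
    omega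

lemma exists_eq_adjPartition (Q : Finpartition (univ : Finset (Fin (m + 1))))
    (hcard : #Q.parts = m) (hint : ∀ p ∈ Q.parts, IsIntervalFinset p) :
    ∃ i, Q = adjPartition i := by
  obtain ⟨D, hD, hD2, hsingle⟩ :=
    Q.exists_card_eq_two_of_card_parts_add_one (by simp [hcard])
  obtain ⟨i, rfl⟩ := exists_eq_castSucc_pair_of_isIntervalFinset (hint D hD) hD2
  exact ⟨i, Q.eq_ofPart hD hsingle⟩

end AdjacentPair

lemma exists_eq_compl_singleton_of_card {m : ℕ} {A : Finset (Fin (m + 1))} (hA : #A = m) :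
    ∃ j, A = {j}ᶜ := by
  obtain ⟨j, hj⟩ := card_eq_one.1 (by rw [card_compl, Fintype.card_fin, hA]; omega : #Aᶜ = 1)
  exact ⟨j, by rw [← hj, compl_compl]⟩

section League

variable {m : ℕ} {P : Set (Finpartition (univ : Finset (Fin (m + 1))))}
  {T : Set (Finset (Fin (m + 1)))}

lemma ncard_mul_ncard_le_of_isLeague (hL : IsLeague (m + 1) m P T)
    (hint : ∀ Q ∈ P, ∀ p ∈ Q.parts, IsIntervalFinset p) :
    P.ncard * T.ncard ≤ m / 2 * ((m + 1) / 2) := by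
  classical
  obtain ⟨hPcard, hTcard, hnot⟩ := hL
  set I : Finset (Fin m) := univ.filter fun i => adjPartition i ∈ P
  set J : Finset (Fin (m + 1)) := univ.filter fun j => {j}ᶜ ∈ T
  have hP : P.ncard ≤ #I := by
    have hsub : P ⊆ adjPartition '' I := by
      intro Q hQ
      obtain ⟨i, rfl⟩ := exists_eq_adjPartition Q (hPcard Q hQ) (hint Q hQ)
      exact ⟨i, by simpa [I] using hQ, rfl⟩
    calc P.ncard ≤ _ := Set.ncard_le_ncard hsub
      _ ≤ #I := (Set.ncard_image_le).trans (Set.ncard_coe_finset I).le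
  have hT : T.ncard ≤ #J := by
    have hsub : T ⊆ (fun j => {j}ᶜ) '' J := by
      intro A hA
      obtain ⟨j, rfl⟩ := exists_eq_compl_singleton_of_card (hTcard A hA)
      exact ⟨j, by simpa [J] using hA, rfl⟩
    calc T.ncard ≤ _ := Set.ncard_le_ncard hsub
      _ ≤ #J := (Set.ncard_image_le).trans (Set.ncard_coe_finset J).le
  have hIJ : ∀ i ∈ I, i.castSucc ∉ J ∧ i.succ ∉ J := by
    intro i hi
    simp only [I, J, mem_filter, mem_univ, true_and] at hi ⊢
    constructor <;> intro hj <;> refine hnot _ hi _ hj ?_ <;>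
      simp [isTransversal_compl_singleton_adjPartition_iff]
  calc P.ncard * T.ncard ≤ #I * #J := Nat.mul_le_mul hP hT
    _ ≤ m / 2 * ((m + 1) / 2) := Fin.card_mul_card_le_of_forall_notMem I J hIJ

end League

lemma exists_isLeague_ncard_mul_ncard_eq (m : ℕ) :
    ∃ P T, IsLeague (m + 1) m P T ∧ (∀ Q ∈ P, ∀ p ∈ Q.parts, IsIntervalFinset p) ∧
      m / 2 * ((m + 1) / 2) = P.ncard * T.ncard := by
  let pair (i : Fin (m / 2)) : Fin m := Fin.castLE (Nat.div_le_self m 2) i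
  let point (j : Fin ((m + 1) / 2)) : Fin (m + 1) := ⟨m / 2 + 1 + j, by omega⟩
  have hpoint : Function.Injective point := fun j j' h => by
    simpa [point, Fin.ext_iff] using h
  refine ⟨Set.range (adjPartition ∘ pair), Set.range fun j => {point j}ᶜ,
    ⟨?_, ?_, ?_⟩, ?_, ?_⟩
  · rintro _ ⟨i, rfl⟩
    exact card_adjPartition_parts _
  · rintro _ ⟨j, rfl⟩
    rw [card_compl, Fintype.card_fin, card_singleton, Nat.add_sub_cancel]
  · rintro _ ⟨i, rfl⟩ _ ⟨j, rfl⟩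
    simp only [Function.comp_apply, isTransversal_compl_singleton_adjPartition_iff, Fin.ext_iff,
      Fin.val_castSucc, Fin.val_succ, pair, point, Fin.val_castLE]
    omega
  · rintro _ ⟨i, rfl⟩ p hp
    exact isIntervalFinset_of_mem_adjPartition hp
  · rw [Set.ncard_range_of_injective (adjPartition_injective.comp (Fin.castLE_injective _)),
      Set.ncard_range_of_injective (f := fun j => {point j}ᶜ)
        (compl_injective.comp (singleton_injective.comp hpoint)),
      Nat.card_eq_fintype_card, Nat.card_eq_fintype_card, Fintype.card_fin, Fintype.card_fin]

/-- `⌊(n−1)/2⌋` and `⌈(n−1)/2⌉` appear as the natural-number quotients `(n - 1) / 2` and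
`n / 2`. -/
theorem leagueFStar_top (n : ℕ) (hn : 2 ≤ n) :
    leagueFStar n (n - 1) = ((n - 1) / 2) * (n / 2) := by
  obtain ⟨m, rfl⟩ : ∃ m, n = m + 1 := ⟨n - 1, by omega⟩
  rw [Nat.add_sub_cancel]
  refine IsGreatest.csSup_eq ⟨?_, ?_⟩
  · exact exists_isLeague_ncard_mul_ncard_eq m
  · rintro _ ⟨P, T, hL, hint, rfl⟩
    exact ncard_mul_ncard_le_of_isLeague hL hint
end
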